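/- arXiv:2008.06469 — 7 statements merged into one kernel-verified Lean document; each statement's English description precedes it below -/
import Mathlib

section
/- Let B_G be the set of partitions β_1 ≤ β_2 ≤ … ≤ β_n into positive parts such that β_1 ∈ {1, 2} and for 2 ≤ i ≤ n: if β_i is odd then 2 ≤ β_i − β_{i−1} ≤ 3, and if β_i is even then 3 ≤ β_i − β_{i−1} ≤ 4. Then for all integers n ≥ 1 and h ≥ 0, the polynomial ∑ q^{β_1 + … + β_n}, summed over all partitions in B_G with exactly n parts and largest part equal to 2n + 2h − 1, equals q^{n² + h² + 2h} · [n−1 choose h]_{q²}. -/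
open Finset PowerSeries

/-- `(q^j; q^j)_n = ∏_{i=0}^{n-1} (1 - q^{j(i+1)})` as a power series in `q`. -/
noncomputable def qPoch (j n : ℕ) : PowerSeries ℚ :=
  ∏ i ∈ Finset.range n, (1 - (PowerSeries.X : PowerSeries ℚ) ^ (j * (i + 1)))

/-- The Gaussian binomial coefficient `[A choose B]_{q^j}`, i.e.
`(q^j;q^j)_A / ((q^j;q^j)_B (q^j;q^j)_{A-B})` for `B ≤ A` and `0` otherwise. -/
noncomputable def gaussBinom (j A B : ℕ) : PowerSeries ℚ :=
  if B ≤ A then qPoch j A * (qPoch j B)⁻¹ * (qPoch j (A - B))⁻¹ else 0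

/-!
A partition in `B_G` is determined by the set `S` of positions of its even parts: consecutive
parts differ by `2`, plus `1` for each of the two that is even, and the first part is `1` or `2`.
Hence the `i`-th part is `2i + 1 + 2·#{k ∈ S | k < i} + [i ∈ S]`. The largest part is
`2n + 2h - 1` exactly when `S` is an `h`-subset of `{0, …, n-2}`, and then the weight of the
partition is `n² + h + 2 ∑_{k ∈ S} (n - 1 - k)`. The theorem thus reduces to the subset-sum form
`[A choose B]_{q^j} q^{j·C(B+1,2)} = ∑_{S ⊆ {0,…,A-1}, |S| = B} q^{j ∑_{i ∈ S} (A - i)}`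
of the Gaussian binomial, which follows from the `q`-Pascal recurrence.
-/

lemma qPoch_zero (j : ℕ) : qPoch j 0 = 1 := prod_range_zero _

lemma qPoch_succ (j n : ℕ) : qPoch j (n + 1) = qPoch j n * (1 - X ^ (j * (n + 1))) :=
  prod_range_succ _ _

section GaussBinom

variable {j : ℕ}

lemma constantCoeff_qPoch (hj : 0 < j) (n : ℕ) : constantCoeff (qPoch j n) = 1 := by
  simp [qPoch, map_prod, hj.ne']

lemma qPoch_ne_zero (hj : 0 < j) (n : ℕ) : qPoch j n ≠ 0 := fun h => by
  simpa [h] using constantCoeff_qPoch hj n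

lemma gaussBinom_eq_zero_of_lt {A B : ℕ} (h : A < B) : gaussBinom j A B = 0 :=
  if_neg (by omega)

lemma gaussBinom_mul_qPoch_mul_qPoch (hj : 0 < j) {A B : ℕ} (h : B ≤ A) :
    gaussBinom j A B * (qPoch j B * qPoch j (A - B)) = qPoch j A := by
  have hinv (m : ℕ) : qPoch j m * (qPoch j m)⁻¹ = 1 :=
    PowerSeries.mul_inv_cancel _ (by simp [constantCoeff_qPoch hj])
  rw [gaussBinom, if_pos h]
  linear_combination (qPoch j A * (qPoch j (A - B))⁻¹ * qPoch j (A - B)) * hinv B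
    + qPoch j A * hinv (A - B)

lemma gaussBinom_eq_of_mul_eq (hj : 0 < j) {A B : ℕ} (h : B ≤ A) {p : PowerSeries ℚ}
    (hp : p * (qPoch j B * qPoch j (A - B)) = qPoch j A) : gaussBinom j A B = p :=
  mul_right_cancel₀ (mul_ne_zero (qPoch_ne_zero hj B) (qPoch_ne_zero hj (A - B)))
    ((gaussBinom_mul_qPoch_mul_qPoch hj h).trans hp.symm)

lemma gaussBinom_zero_right (hj : 0 < j) (A : ℕ) : gaussBinom j A 0 = 1 :=
  gaussBinom_eq_of_mul_eq hj A.zero_le (by simp [qPoch_zero])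

lemma gaussBinom_self (hj : 0 < j) (A : ℕ) : gaussBinom j A A = 1 :=
  gaussBinom_eq_of_mul_eq hj le_rfl (by simp [qPoch_zero])

lemma gaussBinom_succ_succ (hj : 0 < j) (A B : ℕ) :
    gaussBinom j (A + 1) (B + 1) =
      X ^ (j * (B + 1)) * gaussBinom j A (B + 1) + gaussBinom j A B := by
  rcases lt_trichotomy B A with hlt | rfl | hgt
  · obtain ⟨m, rfl⟩ : ∃ m, A = B + m + 1 := ⟨A - B - 1, by omega⟩
    have h₁ := gaussBinom_mul_qPoch_mul_qPoch hj (A := B + m + 1) (B := B + 1) (by omega)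
    have h₂ := gaussBinom_mul_qPoch_mul_qPoch hj (A := B + m + 1) (B := B) (by omega)
    rw [show B + m + 1 - (B + 1) = m by omega] at h₁
    rw [show B + m + 1 - B = m + 1 by omega, qPoch_succ j m] at h₂
    refine gaussBinom_eq_of_mul_eq hj (A := B + m + 1 + 1) (B := B + 1) (by omega) ?_
    rw [show B + m + 1 + 1 - (B + 1) = m + 1 by omega, qPoch_succ j m, qPoch_succ j (B + m + 1)]
    linear_combination (X ^ (j * (B + 1)) * (1 - X ^ (j * (m + 1)))) * h₁
      + (1 - X ^ (j * (B + 1))) * h₂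
      + gaussBinom j (B + m + 1) B * qPoch j m * (1 - X ^ (j * (m + 1))) * qPoch_succ j B
  · simp [gaussBinom_self hj, gaussBinom_eq_zero_of_lt]
  · simp [gaussBinom_eq_zero_of_lt, hgt, hgt.trans B.lt_succ_self]

end GaussBinom

lemma Finset.sum_powersetCard_succ_insert {α M : Type*} [DecidableEq α] [AddCommMonoid M]
    {a : α} {s : Finset α} (ha : a ∉ s) (k : ℕ) (f : Finset α → M) :
    ∑ t ∈ powersetCard (k + 1) (insert a s), f t =
      ∑ t ∈ powersetCard (k + 1) s, f t + ∑ t ∈ powersetCard k s, f (insert a t) := by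
  have hnot {t} (ht : t ∈ powersetCard k s) : a ∉ t := fun h => ha ((mem_powersetCard.1 ht).1 h)
  rw [powersetCard_succ_insert ha, sum_union, sum_image]
  · intro t ht u hu htu
    rw [← erase_insert (hnot ht), ← erase_insert (hnot hu), htu]
  · refine disjoint_left.2 fun t ht ht' => ?_
    obtain ⟨u, -, rfl⟩ := mem_image.1 ht'
    exact ha ((mem_powersetCard.1 ht).1 (mem_insert_self a u))

lemma sum_succ_sub_eq_of_subset_range {A : ℕ} {T : Finset ℕ} (hT : T ⊆ range A) :
    ∑ i ∈ T, (A + 1 - i) = ∑ i ∈ T, (A - i) + #T := by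
  rw [card_eq_sum_ones, ← sum_add_distrib]
  exact sum_congr rfl fun i hi => by have := mem_range.1 (hT hi); omega

lemma gaussBinom_mul_X_pow_eq_sum_powersetCard {j : ℕ} (hj : 0 < j) (A B : ℕ) :
    gaussBinom j A B * X ^ (j * (B + 1).choose 2) =
      ∑ S ∈ (range A).powersetCard B, X ^ (j * ∑ i ∈ S, (A - i)) := by
  induction A generalizing B with
  | zero =>
    cases B with
    | zero => simp [gaussBinom_zero_right hj]
    | succ B => simp [gaussBinom_eq_zero_of_lt]
  | succ A ih =>
    cases B with
    | zero => simp [gaussBinom_zero_right hj]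
    | succ B =>
      have hA : A ∉ range A := by simp
      have h_notMem : ∀ S ∈ (range A).powersetCard (B + 1),
          (X : ℚ⟦X⟧) ^ (j * ∑ i ∈ S, (A + 1 - i)) =
            X ^ (j * (B + 1)) * X ^ (j * ∑ i ∈ S, (A - i)) := by
        intro S hS
        obtain ⟨hSA, hcard⟩ := mem_powersetCard.1 hS
        rw [sum_succ_sub_eq_of_subset_range hSA, hcard, ← pow_add]
        ring_nf
      have h_insert : ∀ T ∈ (range A).powersetCard B,
          (X : ℚ⟦X⟧) ^ (j * ∑ i ∈ insert A T, (A + 1 - i)) =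
            X ^ (j * (B + 1)) * X ^ (j * ∑ i ∈ T, (A - i)) := by
        intro T hT
        obtain ⟨hTA, hcard⟩ := mem_powersetCard.1 hT
        rw [sum_insert fun h => hA (hTA h), sum_succ_sub_eq_of_subset_range hTA, hcard,
          Nat.add_sub_cancel_left, ← pow_add]
        ring_nf
      rw [range_add_one, sum_powersetCard_succ_insert hA, sum_congr rfl h_notMem,
        sum_congr rfl h_insert, ← mul_sum, ← mul_sum, ← ih, ← ih, gaussBinom_succ_succ hj,
        Nat.choose_succ_succ' (B + 1), Nat.choose_one_right]
      ring

lemma coeff_sum_X_pow {R α : Type*} [Semiring R] (s : Finset α) (e : α → ℕ) (N : ℕ) :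
    coeff N (∑ x ∈ s, (X : R⟦X⟧) ^ e x) = #{x ∈ s | e x = N} := by
  simp [map_sum, coeff_X_pow, sum_boole, eq_comm]

def IsBasisGap (a b : ℕ) : Prop :=
  (Odd b → a + 2 ≤ b ∧ b ≤ a + 3) ∧ (Even b → a + 3 ≤ b ∧ b ≤ a + 4)

def basisPart (S : Finset ℕ) (i : ℕ) : ℕ :=
  2 * i + 1 + 2 * #{k ∈ S | k < i} + if i ∈ S then 1 else 0

def basisList (n : ℕ) (S : Finset ℕ) : List ℕ :=
  List.ofFn fun i : Fin n => basisPart S i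

def evenPositions (l : List ℕ) : Finset ℕ :=
  {i ∈ range l.length | Even (l.getD i 0)}

section BasisPart

variable (S : Finset ℕ)

lemma basisPart_zero : basisPart S 0 = 1 + if 0 ∈ S then 1 else 0 := by
  simp [basisPart]

lemma basisPart_succ (i : ℕ) :
    basisPart S (i + 1) =
      basisPart S i + 2 + (if i ∈ S then 1 else 0) + if i + 1 ∈ S then 1 else 0 := by
  have : #{k ∈ S | k < i + 1} = #{k ∈ S | k < i} + if i ∈ S then 1 else 0 := by
    rw [show {k ∈ S | k < i + 1} = {k ∈ S | k < i ∨ k = i} by simp only [Nat.lt_succ_iff_lt_or_eq],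
      filter_or, card_union_of_disjoint (disjoint_filter.2 fun _ _ h => h.ne), filter_eq']
    split_ifs <;> simp
  simp only [basisPart, this]
  ring

lemma even_basisPart_iff (i : ℕ) : Even (basisPart S i) ↔ i ∈ S := by
  unfold basisPart
  split_ifs with h <;> simp [h, Nat.even_add, parity_simps]

lemma isBasisGap_basisPart (i : ℕ) : IsBasisGap (basisPart S i) (basisPart S (i + 1)) := by
  have h := basisPart_succ S i
  refine ⟨fun hodd => ?_, fun heven => ?_⟩
  · rw [← Nat.not_even_iff_odd, even_basisPart_iff] at hodd
    split_ifs at h <;> omega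
  · rw [even_basisPart_iff] at heven
    split_ifs at h <;> omega

lemma basisPart_mono : Monotone (basisPart S) :=
  monotone_nat_of_le_succ fun i => by rw [basisPart_succ]; omega

end BasisPart

lemma sum_range_two_mul_add_one (n : ℕ) : ∑ i ∈ range n, (2 * i + 1) = n ^ 2 := by
  induction n with
  | zero => simp
  | succ n ih => rw [sum_range_succ, ih]; ring

lemma sum_range_card_filter_lt (S : Finset ℕ) (n : ℕ) :
    ∑ i ∈ range n, #{k ∈ S | k < i} = ∑ k ∈ S, (n - 1 - k) := by
  simp only [card_filter]
  rw [sum_comm]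
  refine sum_congr rfl fun k _ => ?_
  rw [← card_filter, show {i ∈ range n | k < i} = Ioo k n by ext; simp [and_comm], Nat.card_Ioo]
  omega

section BasisList

variable {n : ℕ} {S : Finset ℕ}

@[simp] lemma length_basisList (n : ℕ) (S : Finset ℕ) : (basisList n S).length = n :=
  List.length_ofFn

@[simp] lemma getElem_basisList {i : ℕ} (hi : i < (basisList n S).length) :
    (basisList n S)[i] = basisPart S i :=
  List.getElem_ofFn ..

lemma pairwise_le_basisList : (basisList n S).Pairwise (· ≤ ·) :=
  List.pairwise_ofFn.2 fun _ _ hij => basisPart_mono S hij.le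

lemma pos_of_mem_basisList : ∀ x ∈ basisList n S, 0 < x := by
  simp [basisList, List.mem_ofFn, basisPart]

lemma head?_basisList : ∀ x, (basisList n S).head? = some x → x = 1 ∨ x = 2 := by
  cases n with
  | zero => simp [basisList]
  | succ n =>
    simp only [basisList, List.ofFn_succ, List.head?_cons, Option.some.injEq]
    rintro x rfl
    rw [Fin.val_zero, basisPart_zero]
    split_ifs <;> simp

lemma isChain_basisList : (basisList n S).IsChain IsBasisGap :=
  List.isChain_iff_getElem.2 fun i _ => by
    simpa only [getElem_basisList] using isBasisGap_basisPart S i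

lemma getLast?_basisList_succ (m : ℕ) : (basisList (m + 1) S).getLast? = some (basisPart S m) := by
  rw [List.getLast?_eq_getElem?, length_basisList, Nat.add_sub_cancel,
    List.getElem?_eq_getElem (by simp), getElem_basisList]

lemma getLast?_basisList_eq_some_iff (hn : 1 ≤ n) (hS : S ⊆ range n) (h : ℕ) :
    (basisList n S).getLast? = some (2 * n + 2 * h - 1) ↔ S ∈ (range (n - 1)).powersetCard h := by
  obtain ⟨m, rfl⟩ : ∃ m, n = m + 1 := ⟨n - 1, by omega⟩
  rw [getLast?_basisList_succ, Option.some.injEq, mem_powersetCard, Nat.add_sub_cancel]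
  by_cases hm : m ∈ S
  · have heven := (even_basisPart_iff S m).2 hm
    refine iff_of_false (fun hpart => ?_) fun hsub => by simpa using hsub.1 hm
    rw [hpart, Nat.even_iff] at heven
    omega
  · have hsub : S ⊆ range m := fun k hk => by
      have := mem_range.1 (hS hk)
      exact mem_range.2 (lt_of_le_of_ne (by omega) fun h => hm (h ▸ hk))
    have hfilt : {k ∈ S | k < m} = S := filter_true_of_mem fun k hk => mem_range.1 (hsub hk)
    simp only [basisPart, hfilt, hm, hsub, if_false, true_and]
    omega

lemma sum_basisList (hS : S ⊆ range n) :
    (basisList n S).sum = n ^ 2 + #S + 2 * ∑ k ∈ S, (n - 1 - k) := by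
  have hcard : ∑ i ∈ range n, (if i ∈ S then 1 else 0) = #S := by
    rw [sum_boole, Nat.cast_id, filter_mem_eq_inter, inter_eq_right.2 hS]
  rw [basisList, List.sum_ofFn, Fin.sum_univ_eq_sum_range (basisPart S)]
  simp only [basisPart]
  rw [sum_add_distrib, sum_add_distrib, sum_range_two_mul_add_one, ← mul_sum,
    sum_range_card_filter_lt, hcard]
  ring

lemma evenPositions_basisList (hS : S ⊆ range n) : evenPositions (basisList n S) = S := by
  ext i
  simp only [evenPositions, mem_filter, mem_range, length_basisList]
  constructor
  · rintro ⟨hi, heven⟩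
    rwa [List.getD_eq_getElem _ _ (by simpa using hi), getElem_basisList,
      even_basisPart_iff] at heven
  · intro hi
    have hin := mem_range.1 (hS hi)
    rw [List.getD_eq_getElem _ _ (by simpa using hin), getElem_basisList, even_basisPart_iff]
    exact ⟨hin, hi⟩

lemma basisList_evenPositions {l : List ℕ} (hhead : ∀ x, l.head? = some x → x = 1 ∨ x = 2)
    (hchain : l.IsChain IsBasisGap) : basisList l.length (evenPositions l) = l := by
  set S := evenPositions l
  have hmem {i : ℕ} (hi : i < l.length) : i ∈ S ↔ Even l[i] := by
    simp [S, evenPositions, hi]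
  have hparts (i : ℕ) (hi : i < l.length) : l[i] = basisPart S i := by
    induction i with
    | zero =>
      have h12 := hhead l[0] (by rw [List.head?_eq_getElem?, List.getElem?_eq_getElem hi])
      rw [basisPart_zero]
      split_ifs with h0 <;> rw [hmem hi, Nat.even_iff] at h0 <;> omega
    | succ i ih =>
      obtain ⟨hodd, heven⟩ := List.isChain_iff_getElem.1 hchain i hi
      rw [← Nat.not_even_iff_odd] at hodd
      have hstep := basisPart_succ S i
      simp only [← ih (by omega), hmem hi, hmem (show i < l.length by omega)] at hstep
      split_ifs at hstep with h₁ h₂ h₂ <;> simp only [Nat.even_iff] at h₁ h₂ hodd heven <;> omega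
  exact List.ext_getElem (by simp) fun i _ hi => by rw [getElem_basisList, hparts i hi]

lemma injOn_basisList (n : ℕ) : Set.InjOn (basisList n) {S | S ⊆ range n} :=
  fun S hS T hT hST => by
    rw [← evenPositions_basisList hS, ← evenPositions_basisList hT, hST]

end BasisList

def basisPartitions (n h N : ℕ) : Set (List ℕ) :=
  {l | l.Pairwise (· ≤ ·) ∧ (∀ x ∈ l, 0 < x) ∧ (∀ x, l.head? = some x → x = 1 ∨ x = 2) ∧
    l.IsChain IsBasisGap ∧ l.length = n ∧ l.getLast? = some (2 * n + 2 * h - 1) ∧ l.sum = N}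

lemma basisPartitions_eq_image {n : ℕ} (hn : 1 ≤ n) (h N : ℕ) :
    basisPartitions n h N =
      ↑({S ∈ (range (n - 1)).powersetCard h | (basisList n S).sum = N}.image (basisList n)) := by
  ext l
  simp only [basisPartitions, Set.mem_ofPred_eq, coe_image, coe_filter, Set.mem_image]
  constructor
  · rintro ⟨-, -, hhead, hchain, hlen, hlast, hsum⟩
    have hl : basisList n (evenPositions l) = l := hlen ▸ basisList_evenPositions hhead hchain
    have hS : evenPositions l ⊆ range n := hlen ▸ filter_subset _ _
    rw [← hl, getLast?_basisList_eq_some_iff hn hS] at hlast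
    exact ⟨evenPositions l, ⟨hlast, by rwa [hl]⟩, hl⟩
  · rintro ⟨S, ⟨hS, hsum⟩, rfl⟩
    exact ⟨pairwise_le_basisList, pos_of_mem_basisList, head?_basisList, isChain_basisList,
      length_basisList n S,
      (getLast?_basisList_eq_some_iff hn
        ((mem_powersetCard.1 hS).1.trans (range_subset_range.2 (Nat.sub_le n 1))) h).2 hS, hsum⟩

lemma ncard_basisPartitions {n : ℕ} (hn : 1 ≤ n) (h N : ℕ) :
    (basisPartitions n h N).ncard =
      #{S ∈ (range (n - 1)).powersetCard h | (basisList n S).sum = N} := by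
  rw [basisPartitions_eq_image hn, Set.ncard_coe_finset, card_image_of_injOn]
  exact (injOn_basisList n).mono fun S hS =>
    (mem_powersetCard.1 (mem_filter.1 hS).1).1.trans (range_subset_range.2 (Nat.sub_le n 1))

lemma X_pow_mul_gaussBinom_eq_sum_basisList (n h : ℕ) :
    (X : ℚ⟦X⟧) ^ (n ^ 2 + h ^ 2 + 2 * h) * gaussBinom 2 (n - 1) h =
      ∑ S ∈ (range (n - 1)).powersetCard h, X ^ (basisList n S).sum := by
  have hchoose : 2 * (h + 1).choose 2 = h ^ 2 + h := by
    have := Nat.add_one_mul_choose_eq h 1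
    rw [Nat.choose_one_right] at this
    linarith
  calc (X : ℚ⟦X⟧) ^ (n ^ 2 + h ^ 2 + 2 * h) * gaussBinom 2 (n - 1) h
      = X ^ (n ^ 2 + h) * (gaussBinom 2 (n - 1) h * X ^ (2 * (h + 1).choose 2)) := by
        rw [hchoose]; ring
    _ = ∑ S ∈ (range (n - 1)).powersetCard h, X ^ (basisList n S).sum := by
        rw [gaussBinom_mul_X_pow_eq_sum_powersetCard two_pos, mul_sum]
        refine sum_congr rfl fun S hS => ?_
        obtain ⟨hsub, hcard⟩ := mem_powersetCard.1 hS
        rw [sum_basisList (hsub.trans (range_subset_range.2 (Nat.sub_le n 1))), hcard, ← pow_add]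

/-- the generating function (stated coefficientwise) for the
basis partitions of the Göllnitz–Gordon SIP class with `n` parts and
largest part `2n + 2h − 1` is `q^{n²+h²+2h} [n−1 choose h]_{q²}`. -/
theorem stmt4 (n h : ℕ) (hn : 1 ≤ n) (N : ℕ) :
    ({l : List ℕ | l.Pairwise (· ≤ ·) ∧ (∀ x ∈ l, 0 < x) ∧
      (∀ x, l.head? = some x → x = 1 ∨ x = 2) ∧
      l.Chain' (fun a b =>
        (Odd b → a + 2 ≤ b ∧ b ≤ a + 3) ∧ (Even b → a + 3 ≤ b ∧ b ≤ a + 4)) ∧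
      l.length = n ∧ l.getLast? = some (2 * n + 2 * h - 1) ∧
      l.sum = N}).ncard =
    PowerSeries.coeff (R := ℚ) N
      ((PowerSeries.X : PowerSeries ℚ) ^ (n ^ 2 + h ^ 2 + 2 * h) *
        gaussBinom 2 (n - 1) h) := by
  change ((basisPartitions n h N).ncard : ℚ) = _
  rw [ncard_basisPartitions hn, X_pow_mul_gaussBinom_eq_sum_basisList, coeff_sum_X_pow]
end

section
/- For all integers r ≥ 0 and s ≥ 0, and every complex number q with |q| < 1: ∑_{n≥0} [r choose n]_{q³} · [n+s choose r]_{q³} · q^{3n² + 3n(s−r)} / (q³;q³)_{n+s} = 1 / ((q³;q³)_r · (q³;q³)_s). -/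
open Finset

/-- `(q^j; q^j)_n = ∏_{i=0}^{n-1} (1 - q^{j(i+1)})` evaluated at a complex `q`. -/
noncomputable def qPochC (q : ℂ) (j n : ℕ) : ℂ :=
  ∏ i ∈ Finset.range n, (1 - q ^ (j * (i + 1)))

/-- Gaussian binomial `[A choose B]_{q^j}` evaluated at a complex `q`. -/
noncomputable def gaussBinomC (q : ℂ) (j A B : ℕ) : ℂ :=
  if B ≤ A then qPochC q j A / (qPochC q j B * qPochC q j (A - B)) else 0

/-!
Put `Q = q³` and `n = r - j`. Since `[r+s-j, r]_Q / (Q;Q)_{r+s-j} = 1 / ((Q;Q)_r (Q;Q)_{s-j})`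
and `n² + n(s - r) = (r - j)(s - j)`, clearing denominators turns the identity into the finite
identity `∑ⱼ [r,j]_Q [s,j]_Q (Q;Q)ⱼ Q^{(r-j)(s-j)} = 1`. That one follows by induction on `r`:
the q-Pascal rule `[r+1,j+1] = [r,j+1] + Q^{r-j}[r,j]` together with
`[s,j+1](Q;Q)_{j+1} = [s,j](Q;Q)ⱼ(1 - Q^{s-j})` makes the sum for `r + 1` equal to the sum for `r`
plus a telescoping sum.
-/

namespace QBinom

variable {K : Type*} [Field K]

noncomputable def qPoch (Q : K) (n : ℕ) : K := ∏ i ∈ range n, (1 - Q ^ (i + 1))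

noncomputable def qBinom (Q : K) (A B : ℕ) : K :=
  if B ≤ A then qPoch Q A / (qPoch Q B * qPoch Q (A - B)) else 0

@[simp]
lemma qPoch_zero (Q : K) : qPoch Q 0 = 1 := prod_range_zero _

lemma qPoch_succ (Q : K) (n : ℕ) : qPoch Q (n + 1) = qPoch Q n * (1 - Q ^ (n + 1)) :=
  prod_range_succ _ _

lemma qBinom_of_le (Q : K) {A B : ℕ} (h : B ≤ A) :
    qBinom Q A B = qPoch Q A / (qPoch Q B * qPoch Q (A - B)) := if_pos h

lemma qBinom_of_lt (Q : K) {A B : ℕ} (h : A < B) : qBinom Q A B = 0 := if_neg (by omega)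

section NonvanishingPoch

variable {Q : K} (hQ : ∀ n, qPoch Q n ≠ 0)
include hQ

lemma one_sub_pow_succ_ne_zero (n : ℕ) : 1 - Q ^ (n + 1) ≠ 0 :=
  right_ne_zero_of_mul (qPoch_succ Q n ▸ hQ (n + 1))

lemma qBinom_zero_right (A : ℕ) : qBinom Q A 0 = 1 := by
  rw [qBinom_of_le Q A.zero_le, Nat.sub_zero, qPoch_zero, one_mul, div_self (hQ A)]

lemma qBinom_self (A : ℕ) : qBinom Q A A = 1 := by
  rw [qBinom_of_le Q le_rfl, Nat.sub_self, qPoch_zero, mul_one, div_self (hQ A)]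

lemma qBinom_succ_succ (A B : ℕ) :
    qBinom Q (A + 1) (B + 1) = qBinom Q A (B + 1) + Q ^ (A - B) * qBinom Q A B := by
  rcases lt_trichotomy B A with hlt | rfl | hgt
  · obtain ⟨k, rfl⟩ := Nat.exists_eq_add_of_lt hlt
    rw [qBinom_of_le Q (show B + 1 ≤ B + k + 1 + 1 by omega),
      qBinom_of_le Q (show B + 1 ≤ B + k + 1 by omega),
      qBinom_of_le Q (show B ≤ B + k + 1 by omega),
      show B + k + 1 + 1 - (B + 1) = k + 1 by omega, show B + k + 1 - (B + 1) = k by omega,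
      show B + k + 1 - B = k + 1 by omega, qPoch_succ Q (B + k + 1), qPoch_succ Q B,
      qPoch_succ Q k, show B + k + 1 + 1 = (k + 1) + (B + 1) by omega, pow_add]
    have := one_sub_pow_succ_ne_zero hQ B
    have := one_sub_pow_succ_ne_zero hQ k
    have := hQ B
    have := hQ k
    field_simp
    ring
  · rw [qBinom_of_lt Q (Nat.lt_succ_self B), Nat.sub_self, pow_zero, qBinom_self hQ,
      qBinom_self hQ]
    ring
  · rw [qBinom_of_lt Q (show A + 1 < B + 1 by omega), qBinom_of_lt Q (show A < B + 1 by omega),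
      qBinom_of_lt Q hgt]
    ring

lemma qBinom_succ_mul_qPoch_succ (s j : ℕ) :
    qBinom Q s (j + 1) * qPoch Q (j + 1) = qBinom Q s j * qPoch Q j * (1 - Q ^ (s - j)) := by
  rcases lt_trichotomy j s with hlt | rfl | hgt
  · obtain ⟨k, rfl⟩ := Nat.exists_eq_add_of_lt hlt
    rw [qBinom_of_le Q (show j + 1 ≤ j + k + 1 by omega),
      qBinom_of_le Q (show j ≤ j + k + 1 by omega),
      show j + k + 1 - (j + 1) = k by omega, show j + k + 1 - j = k + 1 by omega,
      qPoch_succ Q k]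
    have := one_sub_pow_succ_ne_zero hQ k
    have := hQ j
    have := hQ (j + 1)
    have := hQ k
    field_simp
  · rw [qBinom_of_lt Q (Nat.lt_succ_self j), Nat.sub_self, pow_zero, sub_self]
    ring
  · rw [qBinom_of_lt Q (show s < j + 1 by omega), qBinom_of_lt Q hgt]
    ring

/-- q-Pascal in the first factor; summed over `j`, the bracketed difference telescopes. -/
lemma qBinom_succ_succ_term {r j : ℕ} (hj : j ≤ r) (s : ℕ) :
    qBinom Q (r + 1) (j + 1) * qBinom Q s (j + 1) * qPoch Q (j + 1) *
        Q ^ ((r + 1 - (j + 1)) * (s - (j + 1))) =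
      (qBinom Q r (j + 1) * qBinom Q s (j + 1) * qPoch Q (j + 1) *
          Q ^ ((r + 1 - (j + 1)) * (s - (j + 1)))
        - qBinom Q r j * qBinom Q s j * qPoch Q j * Q ^ ((r + 1 - j) * (s - j)))
      + qBinom Q r j * qBinom Q s j * qPoch Q j * Q ^ ((r - j) * (s - j)) := by
  have hstep := qBinom_succ_mul_qPoch_succ hQ s j
  rw [qBinom_succ_succ hQ, show r + 1 - (j + 1) = r - j by omega,
    show r + 1 - j = r - j + 1 by omega]
  rcases lt_or_ge j s with hjs | hsj
  · obtain ⟨k, rfl⟩ := Nat.exists_eq_add_of_lt hjs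
    rw [show j + k + 1 - j = k + 1 by omega] at hstep
    rw [show j + k + 1 - j = k + 1 by omega, show j + k + 1 - (j + 1) = k by omega]
    linear_combination (Q ^ (r - j) * qBinom Q r j * Q ^ ((r - j) * k)) * hstep
  · rw [show s - j = 0 by omega, pow_zero, sub_self, mul_zero] at hstep
    rw [show s - j = 0 by omega, show s - (j + 1) = 0 by omega]
    linear_combination Q ^ (r - j) * qBinom Q r j * hstep

theorem sum_qBinom_mul_qBinom_mul_qPoch_mul_pow (r s : ℕ) :
    ∑ j ∈ range (r + 1), qBinom Q r j * qBinom Q s j * qPoch Q j * Q ^ ((r - j) * (s - j)) = 1 := by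
  induction r with
  | zero => simp [qBinom_zero_right hQ]
  | succ r ih =>
    have htelescope := sum_range_sub
      (fun j ↦ qBinom Q r j * qBinom Q s j * qPoch Q j * Q ^ ((r + 1 - j) * (s - j))) (r + 1)
    rw [sum_range_succ', sum_congr rfl fun j hj ↦
        qBinom_succ_succ_term hQ (mem_range_succ_iff.mp hj) s,
      sum_add_distrib, htelescope, ih]
    simp [qBinom_zero_right hQ, qBinom_of_lt Q (Nat.lt_succ_self r)]

lemma qBinom_reflect_term {r s j : ℕ} (hj : j ≤ r) :
    qBinom Q r (r - j) * qBinom Q (r - j + s) r * Q ^ ((r - j) * (r - j + s - r)) /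
        qPoch Q (r - j + s) * (qPoch Q r * qPoch Q s) =
      qBinom Q r j * qBinom Q s j * qPoch Q j * Q ^ ((r - j) * (s - j)) := by
  rcases le_or_gt j s with hjs | hsj
  · rw [qBinom_of_le Q (Nat.sub_le r j), qBinom_of_le Q (show r ≤ r - j + s by omega),
      qBinom_of_le Q hj,
      qBinom_of_le Q hjs, Nat.sub_sub_self hj, show r - j + s - r = s - j by omega]
    have := hQ j
    have := hQ r
    have := hQ s
    have := hQ (r - j)
    have := hQ (s - j)
    have := hQ (r - j + s)
    field_simp
  · rw [qBinom_of_lt Q (show r - j + s < r by omega), qBinom_of_lt Q hsj]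
    ring

/-- The exponent `n * (n + s - r)` is truncated when `n + s < r`, but then `[n+s, r] = 0`. -/
theorem sum_qBinom_mul_qBinom_mul_pow_div_qPoch (r s : ℕ) :
    ∑ n ∈ range (r + 1), qBinom Q r n * qBinom Q (n + s) r * Q ^ (n * (n + s - r)) /
        qPoch Q (n + s) = 1 / (qPoch Q r * qPoch Q s) := by
  rw [eq_div_iff (mul_ne_zero (hQ r) (hQ s)), sum_mul, ← sum_range_reflect]
  simp only [Nat.add_sub_cancel]
  rw [sum_congr rfl fun j hj ↦ qBinom_reflect_term hQ (Nat.lt_succ_iff.mp (mem_range.mp hj))]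
  exact sum_qBinom_mul_qBinom_mul_qPoch_mul_pow hQ r s

end NonvanishingPoch

lemma qPoch_ne_zero_of_norm_lt_one {K : Type*} [NormedField K] {Q : K} (hQ : ‖Q‖ < 1) (n : ℕ) :
    qPoch Q n ≠ 0 := by
  refine prod_ne_zero_iff.mpr fun i _ h ↦ ?_
  have : ‖Q ^ (i + 1)‖ < 1 := by
    rw [norm_pow]
    exact pow_lt_one₀ (norm_nonneg Q) hQ (Nat.succ_ne_zero i)
  rw [← eq_of_sub_eq_zero h, norm_one] at this
  exact this.false

end QBinom

open QBinom

lemma qPochC_eq_qPoch (q : ℂ) (j n : ℕ) : qPochC q j n = qPoch (q ^ j) n :=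
  prod_congr rfl fun i _ ↦ by rw [pow_mul]

lemma gaussBinomC_eq_qBinom (q : ℂ) (j A B : ℕ) : gaussBinomC q j A B = qBinom (q ^ j) A B := by
  simp only [gaussBinomC, qBinom, qPochC_eq_qPoch]

lemma zpow_three_mul_eq_pow {q : ℂ} {r s n : ℕ} (h : r ≤ n + s) :
    q ^ (3 * (n : ℤ) ^ 2 + 3 * (n : ℤ) * ((s : ℤ) - (r : ℤ))) = (q ^ 3) ^ (n * (n + s - r)) := by
  rw [← pow_mul, ← zpow_natCast]
  push_cast [h]
  ring_nf

/-- Lemma 10 of the paper. -/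
theorem stmt8 (r s : ℕ) (q : ℂ) (hq : ‖q‖ < 1) :
    ∑' n : ℕ, gaussBinomC q 3 r n * gaussBinomC q 3 (n + s) r *
        q ^ (3 * (n : ℤ) ^ 2 + 3 * (n : ℤ) * ((s : ℤ) - (r : ℤ))) / qPochC q 3 (n + s) =
    1 / (qPochC q 3 r * qPochC q 3 s) := by
  have hQ : ∀ n, qPoch (q ^ 3) n ≠ 0 :=
    qPoch_ne_zero_of_norm_lt_one (by simpa using pow_lt_one₀ (norm_nonneg q) hq three_ne_zero)
  have hterm : ∀ n, gaussBinomC q 3 r n * gaussBinomC q 3 (n + s) r *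
        q ^ (3 * (n : ℤ) ^ 2 + 3 * (n : ℤ) * ((s : ℤ) - (r : ℤ))) / qPochC q 3 (n + s) =
      qBinom (q ^ 3) r n * qBinom (q ^ 3) (n + s) r * (q ^ 3) ^ (n * (n + s - r)) /
        qPoch (q ^ 3) (n + s) := fun n ↦ by
    simp only [gaussBinomC_eq_qBinom, qPochC_eq_qPoch]
    rcases le_or_gt r (n + s) with h | h
    · rw [zpow_three_mul_eq_pow h]
    · simp [qBinom_of_lt _ h]
  rw [tsum_congr hterm, qPochC_eq_qPoch, qPochC_eq_qPoch]
  rw [tsum_eq_sum (s := range (r + 1)) fun n hn ↦ by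
    rw [qBinom_of_lt _ (by simpa using hn)]; ring]
  exact sum_qBinom_mul_qBinom_mul_pow_div_qPoch hQ r s
end

section
/- For every complex number q with |q| < 1: 1 + (q² + q³)/(1 − q²) + ∑_{n≥2} (−q³;q⁴)_{n−1} · q^{2n} · (1 + q^{2n−1}) / (q²;q²)_n = ∏_{n≥1, n ≢ 1, 5, 6 (mod 8)} 1/(1 − q^n). -/
/-!
Both sides equal `(−q³;q⁴)_∞ / (q²;q²)_∞`.

For the series, put `s_n = (−q³;q⁴)_n / (q²;q²)_n`. Since
`(1 + q^{4n+3}) − (1 − q^{2n+2}) = q^{2n+2} (1 + q^{2n+1})`, the difference `s_{n+1} − s_n` is the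
`(n+1)`-st term of the series, and `s_1` is its first two terms, so the series telescopes to
`lim s_n`.

For the product, `(−q³;q⁴)_∞ (q³;q⁴)_∞ = (q⁶;q⁸)_∞`. Grouping factors in blocks of eight
consecutive exponents, `∏_{n ≢ 1,5,6 (mod 8)} (1 − qⁿ) · (q⁶;q⁸)_∞ = (q²;q²)_∞ (q³;q⁴)_∞`:
the exponents `≡ 0, 2, 4, 6 (mod 8)` come from `(q²;q²)_∞` and those `≡ 3, 7` from `(q³;q⁴)_∞`.
-/

open Finset Filter Topology Asymptotics

theorem HasProd.prod_range_blocks {M : Type*} [CommMonoid M] [TopologicalSpace M]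
    [ContinuousMul M] [RegularSpace M] {f : ℕ → M} {a : M} (h : HasProd f a) (k : ℕ) [NeZero k] :
    HasProd (fun N => ∏ i ∈ range k, f (k * N + i)) a := by
  refine ((Nat.divModEquiv k).symm.hasProd_iff.mpr h).prod_fiberwise fun N => ?_
  simpa [Fin.prod_univ_eq_prod_range (fun i => f (k * N + i)), mul_comm] using
    hasProd_fintype (fun i : Fin k => f (k * N + i))

theorem hasSum_succ_sub_of_tendsto {E : Type*} [AddCommGroup E] [TopologicalSpace E]
    [ContinuousSub E] [T2Space E] {s : ℕ → E} {L : E}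
    (hs : Summable fun n => s (n + 1) - s n) (h : Tendsto s atTop (𝓝 L)) :
    HasSum (fun n => s (n + 1) - s n) (L - s 0) := by
  rw [hs.hasSum_iff_tendsto_nat]
  simpa only [sum_range_sub] using h.sub_const (s 0)

theorem norm_pow_lt_one {R : Type*} [SeminormedRing R] {x : R} (hx : ‖x‖ < 1) {n : ℕ}
    (hn : n ≠ 0) : ‖x ^ n‖ < 1 :=
  (norm_pow_le' x (Nat.pos_of_ne_zero hn)).trans_lt (pow_lt_one₀ (norm_nonneg x) hx hn)

theorem mul_pow_ne_one {a q : ℂ} (ha : ‖a‖ < 1) (hq : ‖q‖ ≤ 1) (j : ℕ) : a * q ^ j ≠ 1 := by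
  intro h
  have : ‖a * q ^ j‖ < 1 := by
    rw [norm_mul, norm_pow]
    exact mul_lt_one_of_nonneg_of_lt_one_left (norm_nonneg a) ha (pow_le_one₀ (norm_nonneg q) hq)
  simp [h] at this

def qPochhammer (a q : ℂ) (n : ℕ) : ℂ := ∏ j ∈ range n, (1 - a * q ^ j)

noncomputable def qPochhammerInf (a q : ℂ) : ℂ := ∏' j, (1 - a * q ^ j)

section Pochhammer

variable {a q : ℂ}

theorem qPochhammer_succ (a q : ℂ) (n : ℕ) :
    qPochhammer a q (n + 1) = qPochhammer a q n * (1 - a * q ^ n) :=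
  prod_range_succ _ _

theorem qPochhammer_ne_zero (ha : ∀ j, a * q ^ j ≠ 1) (n : ℕ) : qPochhammer a q n ≠ 0 :=
  prod_ne_zero_iff.2 fun j _ => sub_ne_zero.2 (ha j).symm

theorem summable_norm_neg_mul_pow (a : ℂ) (hq : ‖q‖ < 1) : Summable fun j => ‖-(a * q ^ j)‖ := by
  simpa only [norm_neg, norm_mul, norm_pow] using
    (summable_geometric_of_lt_one (norm_nonneg q) hq).mul_left ‖a‖

theorem multipliable_one_sub_mul_pow (a : ℂ) (hq : ‖q‖ < 1) :
    Multipliable fun j => 1 - a * q ^ j := by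
  simpa only [sub_eq_add_neg] using
    multipliable_one_add_of_summable (summable_norm_neg_mul_pow a hq)

theorem hasProd_qPochhammerInf (a : ℂ) (hq : ‖q‖ < 1) :
    HasProd (fun j => 1 - a * q ^ j) (qPochhammerInf a q) :=
  (multipliable_one_sub_mul_pow a hq).hasProd

theorem tendsto_qPochhammer (a : ℂ) (hq : ‖q‖ < 1) :
    Tendsto (qPochhammer a q) atTop (𝓝 (qPochhammerInf a q)) :=
  (hasProd_qPochhammerInf a hq).tendsto_prod_nat

theorem qPochhammerInf_ne_zero (hq : ‖q‖ < 1) (ha : ∀ j, a * q ^ j ≠ 1) :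
    qPochhammerInf a q ≠ 0 := by
  simpa only [qPochhammerInf, sub_eq_add_neg] using
    tprod_one_add_ne_zero_of_summable
      (fun j => by simpa only [← sub_eq_add_neg, ne_eq, sub_eq_zero] using (ha j).symm)
      (summable_norm_neg_mul_pow a hq)

end Pochhammer

section Series

variable {q : ℂ}

noncomputable def pochhammerRatio (q : ℂ) (n : ℕ) : ℂ :=
  qPochhammer (-q ^ 3) (q ^ 4) n / qPochhammer (q ^ 2) (q ^ 2) n

theorem pochhammerRatio_succ_sub {n : ℕ} (h : qPochhammer (q ^ 2) (q ^ 2) (n + 1) ≠ 0) :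
    pochhammerRatio q (n + 1) - pochhammerRatio q n =
      qPochhammer (-q ^ 3) (q ^ 4) n * q ^ (2 * n + 2) * (1 + q ^ (2 * n + 1)) /
        qPochhammer (q ^ 2) (q ^ 2) (n + 1) := by
  simp only [pochhammerRatio, qPochhammer_succ] at h ⊢
  have hn := left_ne_zero_of_mul h
  have hlast := right_ne_zero_of_mul h
  field_simp
  ring

theorem summable_pochhammerRatio_succ_sub (hq : ‖q‖ < 1) :
    Summable fun n => pochhammerRatio q (n + 1) - pochhammerRatio q n := by
  have hq2 := norm_pow_lt_one hq two_ne_zero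
  have hP := qPochhammer_ne_zero (mul_pow_ne_one hq2 hq2.le)
  have hPinf := qPochhammerInf_ne_zero hq2 (mul_pow_ne_one hq2 hq2.le)
  suffices h : (fun n => qPochhammer (-q ^ 3) (q ^ 4) n * q ^ (2 * n + 2) *
      (1 + q ^ (2 * n + 1)) / qPochhammer (q ^ 2) (q ^ 2) (n + 1)) =O[atTop]
      fun n => (q ^ 2) ^ n from
    (summable_of_isBigO_nat (summable_geometric_of_norm_lt_one hq2).norm h.norm_right).congr
      fun n => (pochhammerRatio_succ_sub (hP _)).symm
  have hnum := (tendsto_qPochhammer (-q ^ 3) (norm_pow_lt_one hq four_ne_zero)).isBigO_one ℂ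
  have hden := (((tendsto_qPochhammer _ hq2).comp (tendsto_add_atTop_nat 1)).inv₀
    hPinf).isBigO_one ℂ
  have hgeom : (fun n => q ^ (2 * n + 2)) =O[atTop] fun n => (q ^ 2) ^ n :=
    (isBigO_const_mul_self (q ^ 2) _ _).congr_left fun n => by ring
  have hbdd : (fun n => 1 + q ^ (2 * n + 1)) =O[atTop] fun _ => (1 : ℂ) := by
    refine IsBigO.of_bound 2 (Eventually.of_forall fun n => ?_)
    calc ‖1 + q ^ (2 * n + 1)‖ ≤ 1 + ‖q‖ ^ (2 * n + 1) := by
          simpa only [norm_one, norm_pow] using norm_add_le 1 (q ^ (2 * n + 1))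
      _ ≤ 2 * ‖(1 : ℂ)‖ := by
          rw [norm_one]; linarith [pow_le_one₀ (n := 2 * n + 1) (norm_nonneg q) hq.le]
  exact (((hnum.mul hgeom).mul hbdd).mul hden).congr (fun n => by simp [div_eq_mul_inv])
    fun n => by simp

theorem series_eq_qPochhammerInf_div (hq : ‖q‖ < 1) :
    1 + (q ^ 2 + q ^ 3) / (1 - q ^ 2) +
      ∑' m : ℕ, (∏ j ∈ range (m + 1), (1 + q ^ (4 * j + 3))) *
        q ^ (2 * m + 4) * (1 + q ^ (2 * m + 3)) /
        (∏ j ∈ range (m + 2), (1 - q ^ (2 * (j + 1)))) =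
      qPochhammerInf (-q ^ 3) (q ^ 4) / qPochhammerInf (q ^ 2) (q ^ 2) := by
  have hq2 := norm_pow_lt_one hq two_ne_zero
  have hP := qPochhammer_ne_zero (mul_pow_ne_one hq2 hq2.le)
  have hlim : Tendsto (pochhammerRatio q) atTop
      (𝓝 (qPochhammerInf (-q ^ 3) (q ^ 4) / qPochhammerInf (q ^ 2) (q ^ 2))) :=
    (tendsto_qPochhammer _ (norm_pow_lt_one hq four_ne_zero)).div (tendsto_qPochhammer _ hq2)
      (qPochhammerInf_ne_zero hq2 (mul_pow_ne_one hq2 hq2.le))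
  have htail := hasSum_succ_sub_of_tendsto (s := fun n => pochhammerRatio q (n + 1))
    ((summable_nat_add_iff 1).2 (summable_pochhammerRatio_succ_sub hq))
    (hlim.comp (tendsto_add_atTop_nat 1))
  have hhead : 1 + (q ^ 2 + q ^ 3) / (1 - q ^ 2) = pochhammerRatio q 1 := by
    have h1 := hP 1
    simp only [pochhammerRatio, qPochhammer, range_one, prod_singleton, pow_zero, mul_one] at h1 ⊢
    field_simp
    ring
  have hnum (n : ℕ) : qPochhammer (-q ^ 3) (q ^ 4) n = ∏ j ∈ range n, (1 + q ^ (4 * j + 3)) :=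
    prod_congr rfl fun j _ => by ring
  have hden (n : ℕ) : qPochhammer (q ^ 2) (q ^ 2) n = ∏ j ∈ range n, (1 - q ^ (2 * (j + 1))) :=
    prod_congr rfl fun j _ => by ring
  have hterm (m : ℕ) : (∏ j ∈ range (m + 1), (1 + q ^ (4 * j + 3))) *
      q ^ (2 * m + 4) * (1 + q ^ (2 * m + 3)) /
      (∏ j ∈ range (m + 2), (1 - q ^ (2 * (j + 1)))) =
      pochhammerRatio q (m + 1 + 1) - pochhammerRatio q (m + 1) := by
    rw [pochhammerRatio_succ_sub (hP _), hnum, hden]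
    ring_nf
  rw [hhead, tsum_congr hterm, htail.tsum_eq]
  ring

end Series

section Product

variable {q : ℂ}

def mod8Factor (q : ℂ) (m : ℕ) : ℂ :=
  if (m + 1) % 8 = 1 ∨ (m + 1) % 8 = 5 ∨ (m + 1) % 8 = 6 then 1 else 1 - q ^ (m + 1)

theorem multipliable_mod8Factor (hq : ‖q‖ < 1) : Multipliable (mod8Factor q) := by
  have h : mod8Factor q = fun m =>
      1 + if (m + 1) % 8 = 1 ∨ (m + 1) % 8 = 5 ∨ (m + 1) % 8 = 6 then 0 else -q ^ (m + 1) := by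
    funext m
    unfold mod8Factor
    split_ifs <;> ring
  rw [h]
  refine multipliable_one_add_of_summable <| Summable.of_nonneg_of_le (fun _ => norm_nonneg _)
    (fun m => ?_) (summable_geometric_of_lt_one (norm_nonneg q) hq)
  split_ifs
  · simp
  · rw [norm_neg, norm_pow]
    exact pow_le_pow_of_le_one (norm_nonneg q) hq.le m.le_succ

theorem mod8Factor_block (q : ℂ) (N : ℕ) :
    (∏ i ∈ range 8, mod8Factor q (8 * N + i)) * (1 - q ^ 6 * (q ^ 8) ^ N) =
      (∏ i ∈ range 4, (1 - q ^ 2 * (q ^ 2) ^ (4 * N + i))) *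
        ∏ i ∈ range 2, (1 - q ^ 3 * (q ^ 4) ^ (2 * N + i)) := by
  have hmod (i : ℕ) : (8 * N + i + 1) % 8 = (i + 1) % 8 := by omega
  simp only [prod_range_succ, prod_range_zero, one_mul, mod8Factor, hmod, Nat.reduceAdd,
    Nat.reduceMod, Nat.reduceEqDiff, or_self, or_true, true_or, ↓reduceIte]
  ring

theorem tprod_mod8Factor_mul (hq : ‖q‖ < 1) :
    (∏' m, mod8Factor q m) * qPochhammerInf (-q ^ 3) (q ^ 4) = qPochhammerInf (q ^ 2) (q ^ 2) := by
  have hq4 := norm_pow_lt_one hq four_ne_zero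
  have hblocks : (∏' m, mod8Factor q m) * qPochhammerInf (q ^ 6) (q ^ 8) =
      qPochhammerInf (q ^ 2) (q ^ 2) * qPochhammerInf (q ^ 3) (q ^ 4) := by
    refine (((multipliable_mod8Factor hq).hasProd.prod_range_blocks 8).mul
      (hasProd_qPochhammerInf _ (norm_pow_lt_one hq (by norm_num)))).unique ?_
    simpa only [mod8Factor_block] using
      ((hasProd_qPochhammerInf _ (norm_pow_lt_one hq two_ne_zero)).prod_range_blocks 4).mul
        ((hasProd_qPochhammerInf _ hq4).prod_range_blocks 2)
  have hsq : qPochhammerInf (-q ^ 3) (q ^ 4) * qPochhammerInf (q ^ 3) (q ^ 4) =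
      qPochhammerInf (q ^ 6) (q ^ 8) := by
    rw [qPochhammerInf, qPochhammerInf, ← (multipliable_one_sub_mul_pow _ hq4).tprod_mul
      (multipliable_one_sub_mul_pow _ hq4)]
    exact tprod_congr fun j => by ring
  refine mul_right_cancel₀
    (qPochhammerInf_ne_zero hq4 (mul_pow_ne_one (norm_pow_lt_one hq three_ne_zero) hq4.le)) ?_
  rw [mul_assoc, hsq, hblocks]

theorem tprod_mod8_eq_qPochhammerInf_div (hq : ‖q‖ < 1) :
    ∏' m : ℕ, (if (m + 1) % 8 = 1 ∨ (m + 1) % 8 = 5 ∨ (m + 1) % 8 = 6 then 1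
      else 1 / (1 - q ^ (m + 1))) =
      qPochhammerInf (-q ^ 3) (q ^ 4) / qPochhammerInf (q ^ 2) (q ^ 2) := by
  have hq2 := norm_pow_lt_one hq two_ne_zero
  have hP := qPochhammerInf_ne_zero hq2 (mul_pow_ne_one hq2 hq2.le)
  have hGT := tprod_mod8Factor_mul hq
  have hG : ∏' m, mod8Factor q m ≠ 0 := left_ne_zero_of_mul (hGT ▸ hP)
  have hinv : (fun m : ℕ => if (m + 1) % 8 = 1 ∨ (m + 1) % 8 = 5 ∨ (m + 1) % 8 = 6 then (1 : ℂ)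
      else 1 / (1 - q ^ (m + 1))) = fun m => (mod8Factor q m)⁻¹ := by
    funext m
    unfold mod8Factor
    split_ifs <;> simp
  rw [hinv, ((multipliable_mod8Factor hq).hasProd.inv₀ hG).tprod_eq, eq_div_iff hP, ← hGT,
    inv_mul_cancel_left₀ hG]

end Product

/-- The sum over `n ≥ 2` is written with `n = m + 2`; `(−q³;q⁴)_{n−1}` is
`∏_{j=0}^{n-2} (1 + q^{4j+3})` and `(q²;q²)_n = ∏_{j=0}^{n-1} (1 − q^{2(j+1)})`. -/
theorem stmt10 (q : ℂ) (hq : ‖q‖ < 1) :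
    1 + (q ^ 2 + q ^ 3) / (1 - q ^ 2) +
      ∑' m : ℕ, (∏ j ∈ Finset.range (m + 1), (1 + q ^ (4 * j + 3))) *
        q ^ (2 * m + 4) * (1 + q ^ (2 * m + 3)) /
        (∏ j ∈ Finset.range (m + 2), (1 - q ^ (2 * (j + 1)))) =
    ∏' m : ℕ, (if (m + 1) % 8 = 1 ∨ (m + 1) % 8 = 5 ∨ (m + 1) % 8 = 6 then 1
      else 1 / (1 - q ^ (m + 1))) :=
  (series_eq_qPochhammerInf_div hq).trans (tprod_mod8_eq_qPochhammerInf_div hq).symm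
end

section
/- Fix an integer r ≥ −1 and an integer m ≥ 1. For each positive integer v, let β_r(m, v) be the number of partitions of v with n copies of n having exactly m parts, such that when the parts are listed in ascending lexicographic order, the weighted difference between each pair of consecutive parts is exactly r, and the smallest part has its value equal to its subscript (i.e., is of the form i_i). Then ∑_{v≥1} β_r(m, v)·q^v = q^{m² + r·m(m−1)/2} / ∏_{j=1}^{m} (1 − q^{2j−1}) as formal power series in q. -/
open Finset

/-- Lexicographic order on parts `m_i = (m, i)` of a partition with n copies of n. -/
def LexLe (p q : ℕ × ℕ) : Prop := p.1 < q.1 ∨ (p.1 = q.1 ∧ p.2 ≤ q.2)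

/-!
Write `r = s - 1` with `s : ℕ` and the subscripts as `i_k = x_k + 1`. The chain condition
`a_{k+1} = a_k + i_{k+1} + i_k + r` together with `a_0 = i_0` forces
`a_k = 2 ∑_{t<k} x_t + x_k + 1 + k (s + 1)`, and conversely every `x` gives an admissible list,
since then the `a_k` increase strictly and `a_k ≥ i_k`. Summing,
`∑ a_k = e + ∑_k (2 (m - 1 - k) + 1) x_k`, so the admissible lists of weight `e + n` correspond
to the ways of writing `n` as a combination of `1, 3, …, 2m - 1`, which is the coefficient of
`q^n` in `1 / ∏_j (1 - q^{2j+1})`.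
-/

namespace PowerSeries

variable {K : Type*} [Field K]

theorem mk_dvd_indicator_mul_one_sub_X_pow {d : ℕ} (hd : 0 < d) :
    (mk fun k => if d ∣ k then (1 : K) else 0) * (1 - X ^ d) = 1 := by
  ext n
  rw [mul_sub, mul_one, map_sub, mul_comm, coeff_X_pow_mul', coeff_mk, coeff_one]
  by_cases hn : d ≤ n
  · obtain ⟨k, rfl⟩ := Nat.exists_eq_add_of_le' hn
    simp only [if_pos hn, coeff_mk, Nat.add_sub_cancel, Nat.dvd_add_self_right, sub_self,
      if_neg (show k + d ≠ 0 by omega)]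
  · rcases Nat.eq_zero_or_pos n with rfl | hpos
    · simp [hn]
    · simpa [hn, hpos.ne'] using fun h => hn (Nat.le_of_dvd hpos h)

theorem inv_prod_one_sub_X_pow {ι : Type*} (s : Finset ι) (w : ι → ℕ) (hw : ∀ i ∈ s, 0 < w i) :
    (∏ i ∈ s, ((1 : K⟦X⟧) - X ^ w i))⁻¹ = ∏ i ∈ s, mk fun k => if w i ∣ k then 1 else 0 := by
  rw [inv_eq_iff_mul_eq_one, ← prod_mul_distrib]
  · exact prod_eq_one fun i hi => mk_dvd_indicator_mul_one_sub_X_pow (hw i hi)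
  · rw [map_prod]
    exact prod_ne_zero_iff.mpr fun i hi => by simp [(hw i hi).ne']

theorem coeff_inv_prod_one_sub_X_pow {ι : Type*} [DecidableEq ι] (s : Finset ι) (w : ι → ℕ)
    (hw : ∀ i ∈ s, 0 < w i) (n : ℕ) :
    coeff n (∏ i ∈ s, ((1 : K⟦X⟧) - X ^ w i))⁻¹ =
      (#{f ∈ finsuppAntidiag s n | ∀ i ∈ s, w i ∣ f i} : K) := by
  rw [inv_prod_one_sub_X_pow s w hw, coeff_prod, ← sum_boole]
  refine sum_congr rfl fun f _ => ?_
  rw [← prod_boole]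
  exact prod_congr rfl fun i _ => coeff_mk _ _

end PowerSeries

/-- The partitions counted by `β_r(m, v)`, each listed in ascending lexicographic order. -/
def betaPartitions (r : ℤ) (m v : ℕ) : Set (List (ℕ × ℕ)) :=
  {l | l.Pairwise LexLe ∧ (∀ p ∈ l, 1 ≤ p.2 ∧ p.2 ≤ p.1) ∧
    l.length = m ∧ (∀ p : ℕ × ℕ, l.head? = some p → p.1 = p.2) ∧
    l.IsChain (fun p q => (q.1 : ℤ) - (p.1 : ℤ) - (q.2 : ℤ) - (p.2 : ℤ) = r) ∧
    (l.map Prod.fst).sum = v}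

def chainPart (s : ℕ) (x : ℕ → ℕ) (k : ℕ) : ℕ × ℕ :=
  (2 * ∑ t ∈ range k, x t + x k + 1 + k * (s + 1), x k + 1)

def chainParts (s m : ℕ) (x : ℕ → ℕ) : List (ℕ × ℕ) :=
  (List.range m).map (chainPart s x)

section chainParts

variable {s m : ℕ} {x : ℕ → ℕ}

theorem chainPart_succ_fst (s : ℕ) (x : ℕ → ℕ) (k : ℕ) :
    (chainPart s x (k + 1)).1 = (chainPart s x k).1 + x k + x (k + 1) + s + 1 := by
  simp only [chainPart, sum_range_succ]
  ring

theorem strictMono_chainPart_fst (s : ℕ) (x : ℕ → ℕ) : StrictMono fun k => (chainPart s x k).1 :=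
  strictMono_nat_of_lt_succ fun k => by simp only [chainPart_succ_fst]; omega

theorem chainParts_eq_chainParts_iff {y : ℕ → ℕ} :
    chainParts s m x = chainParts s m y ↔ ∀ k < m, x k = y k := by
  simp only [chainParts, List.map_inj_left, List.mem_range]
  refine ⟨fun h k hk => by simpa [chainPart] using congrArg Prod.snd (h k hk), fun h k hk => ?_⟩
  have hsum : ∑ t ∈ range k, x t = ∑ t ∈ range k, y t :=
    sum_congr rfl fun t ht => h t (by rw [mem_range] at ht; omega)
  simp only [chainPart, hsum, h k hk]

theorem sum_fst_chainParts (s m : ℕ) (x : ℕ → ℕ) :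
    ((chainParts s m x).map Prod.fst).sum =
      m + (s + 1) * ∑ k ∈ range m, k + ∑ k ∈ range m, (2 * (m - 1 - k) + 1) * x k := by
  induction m with
  | zero => simp [chainParts]
  | succ m ih =>
    have hw : ∑ k ∈ range m, (2 * (m + 1 - 1 - k) + 1) * x k =
        ∑ k ∈ range m, (2 * (m - 1 - k) + 1) * x k + 2 * ∑ k ∈ range m, x k := by
      rw [mul_sum, ← sum_add_distrib]
      refine sum_congr rfl fun k hk => ?_
      have : m + 1 - 1 - k = m - 1 - k + 1 := by simp at hk; omega
      rw [this]; ring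
    rw [chainParts, List.range_succ, List.map_append, List.map_append, List.sum_append,
      ← chainParts, ih, sum_range_succ, sum_range_succ, hw]
    simp only [chainPart, List.map_cons, List.map_nil, List.sum_cons, List.sum_nil]
    rw [show m + 1 - 1 - m = 0 by omega]
    ring

theorem chainParts_mem_betaPartitions (s m : ℕ) (x : ℕ → ℕ) :
    chainParts s m x ∈
      betaPartitions (s - 1) m (m + (s + 1) * ∑ k ∈ range m, k +
        ∑ k ∈ range m, (2 * (m - 1 - k) + 1) * x k) := by
  refine ⟨?_, ?_, by simp [chainParts], ?_, ?_, sum_fst_chainParts s m x⟩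
  · exact List.pairwise_map.mpr <| List.pairwise_lt_range.imp
      fun hkl => Or.inl (strictMono_chainPart_fst s x hkl)
  · simp only [chainParts, List.mem_map, List.mem_range]
    rintro _ ⟨k, -, rfl⟩
    simp only [chainPart]
    omega
  · cases m <;> simp [chainParts, chainPart, List.range_succ_eq_map]
  · rw [chainParts, List.isChain_map, List.isChain_range]
    intro k _
    rw [chainPart_succ_fst]
    simp only [chainPart]
    push_cast
    ring

theorem eq_chainParts_of_mem_betaPartitions {l : List (ℕ × ℕ)} {v : ℕ}
    (hl : l ∈ betaPartitions (s - 1) m v) :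
    l = chainParts s m fun k => (l.getD k (0, 0)).2 - 1 := by
  obtain ⟨-, hbound, hlen, hhead, hchain, -⟩ := hl
  set x : ℕ → ℕ := fun k => (l.getD k (0, 0)).2 - 1
  have hsnd : ∀ k (hk : k < l.length), l[k].2 = x k + 1 := fun k hk => by
    have := (hbound _ (List.getElem_mem hk)).1
    simp only [x, List.getD_eq_getElem _ _ hk]
    omega
  have hfst : ∀ k (hk : k < l.length), l[k].1 = (chainPart s x k).1 := by
    intro k
    induction k with
    | zero =>
      intro hk
      rw [hhead _ (List.head?_eq_getElem?.trans (List.getElem?_eq_getElem hk)), hsnd 0 hk]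
      simp [chainPart]
    | succ k ih =>
      intro hk
      have hstep := List.isChain_iff_getElem.mp hchain k hk
      have h₁ := hsnd k (by omega)
      have h₂ := hsnd (k + 1) hk
      rw [chainPart_succ_fst, ← ih (by omega)]
      omega
  refine List.ext_getElem (by simp [chainParts, hlen]) fun k hk _ => ?_
  simp only [chainParts, List.getElem_map, List.getElem_range]
  exact Prod.ext (hfst k hk) (hsnd k hk)

theorem mem_betaPartitions_iff {l : List (ℕ × ℕ)} {v : ℕ} :
    l ∈ betaPartitions (s - 1) m v ↔ ∃ x, l = chainParts s m x ∧
      v = m + (s + 1) * ∑ k ∈ range m, k + ∑ k ∈ range m, (2 * (m - 1 - k) + 1) * x k := by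
  refine ⟨fun hl => ⟨_, eq_chainParts_of_mem_betaPartitions hl, ?_⟩, ?_⟩
  · rw [← sum_fst_chainParts, ← eq_chainParts_of_mem_betaPartitions hl]
    exact hl.2.2.2.2.2.symm
  · rintro ⟨x, rfl, rfl⟩
    exact chainParts_mem_betaPartitions s m x

theorem ncard_betaPartitions (s m n : ℕ) :
    (betaPartitions (s - 1) m (n + (m + (s + 1) * ∑ k ∈ range m, k))).ncard =
      #{f ∈ finsuppAntidiag (range m) n | ∀ k ∈ range m, 2 * (m - 1 - k) + 1 ∣ f k} := by
  set w : ℕ → ℕ := fun k => 2 * (m - 1 - k) + 1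
  set D := {f ∈ finsuppAntidiag (range m) n | ∀ k ∈ range m, w k ∣ f k}
  have hD : ∀ f ∈ D, (∑ k ∈ range m, f k = n ∧ f.support ⊆ range m) ∧
      ∀ k ∈ range m, w k * (f k / w k) = f k := fun f hf => by
    rw [mem_filter, mem_finsuppAntidiag] at hf
    exact ⟨hf.1, fun k hk => Nat.mul_div_cancel' (hf.2 k hk)⟩
  have himage : betaPartitions (s - 1) m (n + (m + (s + 1) * ∑ k ∈ range m, k)) =
      (fun f : ℕ →₀ ℕ => chainParts s m fun k => f k / w k) '' D := by
    ext l
    rw [mem_betaPartitions_iff]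
    constructor
    · rintro ⟨x, rfl, hv⟩
      set f := Finsupp.indicator (range m) fun k _ => w k * x k
      have hf : ∀ k ∈ range m, f k = w k * x k := fun k hk => by
        simp [f, Finsupp.indicator_apply, hk]
      refine ⟨f, ?_, chainParts_eq_chainParts_iff.mpr fun k hk => ?_⟩
      · rw [mem_coe, mem_filter, mem_finsuppAntidiag, sum_congr rfl hf]
        exact ⟨⟨by simp only [w]; omega, Finsupp.support_indicator_subset _ _⟩,
          fun k hk => hf k hk ▸ dvd_mul_right _ _⟩
      · rw [hf k (mem_range.mpr hk), Nat.mul_div_cancel_left _ (Nat.succ_pos _)]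
    · rintro ⟨f, hf, rfl⟩
      refine ⟨_, rfl, ?_⟩
      obtain ⟨⟨hsum, -⟩, hdiv⟩ := hD f hf
      rw [sum_congr rfl hdiv, hsum]
      ring
  rw [himage, Set.InjOn.ncard_image, Set.ncard_coe_finset]
  intro f hf g hg hfg
  obtain ⟨⟨-, hf⟩, hfdiv⟩ := hD f hf
  obtain ⟨⟨-, hg⟩, hgdiv⟩ := hD g hg
  ext k
  by_cases hk : k ∈ range m
  · rw [← hfdiv k hk, ← hgdiv k hk, chainParts_eq_chainParts_iff.mp hfg k (mem_range.mp hk)]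
  · rw [Finsupp.notMem_support_iff.mp (mt (@hf k) hk),
      Finsupp.notMem_support_iff.mp (mt (@hg k) hk)]

end chainParts

theorem stmt14_general (r : ℤ) (hr : -1 ≤ r) (m : ℕ) (e : ℕ)
    (he : 2 * (e : ℤ) = 2 * (m : ℤ) ^ 2 + r * (m : ℤ) * ((m : ℤ) - 1)) :
    (PowerSeries.mk fun v : ℕ =>
      (({l : List (ℕ × ℕ) | l.Pairwise LexLe ∧ (∀ p ∈ l, 1 ≤ p.2 ∧ p.2 ≤ p.1) ∧
        l.length = m ∧ (∀ p : ℕ × ℕ, l.head? = some p → p.1 = p.2) ∧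
        l.Chain' (fun p q => (q.1 : ℤ) - (p.1 : ℤ) - (q.2 : ℤ) - (p.2 : ℤ) = r) ∧
        (l.map Prod.fst).sum = v}.ncard : ℚ))) =
    (PowerSeries.X : PowerSeries ℚ) ^ e *
      (∏ j ∈ Finset.range m, (1 - (PowerSeries.X : PowerSeries ℚ) ^ (2 * j + 1)))⁻¹ := by
  obtain ⟨s, rfl⟩ : ∃ s : ℕ, r = s - 1 := ⟨(r + 1).toNat, by omega⟩
  have hgauss : 2 * ∑ k ∈ range m, (k : ℤ) = m * (m - 1) := by
    clear he
    induction m with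
    | zero => simp
    | succ m ih => rw [sum_range_succ]; push_cast; linear_combination ih
  have he' : e = m + (s + 1) * ∑ k ∈ range m, k := by
    have : (2 : ℤ) * e = 2 * (m + (s + 1) * ∑ k ∈ range m, (k : ℤ)) := by
      linear_combination he - (s + 1) * hgauss
    zify
    linarith
  show PowerSeries.mk (fun v => ((betaPartitions (s - 1) m v).ncard : ℚ)) = _
  rw [← prod_range_reflect (fun j => 1 - (PowerSeries.X : PowerSeries ℚ) ^ (2 * j + 1)) m]
  ext v
  rw [PowerSeries.coeff_mk, PowerSeries.coeff_X_pow_mul']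
  split_ifs with hv
  · obtain ⟨n, rfl⟩ := Nat.exists_eq_add_of_le' hv
    rw [Nat.add_sub_cancel, PowerSeries.coeff_inv_prod_one_sub_X_pow _ _ fun _ _ => Nat.succ_pos _,
      he', ncard_betaPartitions]
  · have : betaPartitions (s - 1) m v = ∅ := Set.eq_empty_of_forall_notMem fun l hl => by
      obtain ⟨x, -, hxv⟩ := mem_betaPartitions_iff.mp hl
      omega
    rw [this, Set.ncard_empty, Nat.cast_zero]

/-- Theorem 20 of the paper,
`∑_v β_r(m,v) q^v = q^{m² + r·m(m−1)/2} / (q;q²)_m`.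
The exponent `e` is given by `2e = 2m² + r·m(m−1)`; a partition with n copies
of n is represented by its list of parts in ascending lexicographic order. -/
theorem stmt14 (r : ℤ) (hr : -1 ≤ r) (m : ℕ) (hm : 1 ≤ m) (e : ℕ)
    (he : 2 * (e : ℤ) = 2 * (m : ℤ) ^ 2 + r * (m : ℤ) * ((m : ℤ) - 1)) :
    (PowerSeries.mk fun v : ℕ =>
      (({l : List (ℕ × ℕ) | l.Pairwise LexLe ∧ (∀ p ∈ l, 1 ≤ p.2 ∧ p.2 ≤ p.1) ∧
        l.length = m ∧ (∀ p : ℕ × ℕ, l.head? = some p → p.1 = p.2) ∧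
        l.Chain' (fun p q => (q.1 : ℤ) - (p.1 : ℤ) - (q.2 : ℤ) - (p.2 : ℤ) = r) ∧
        (l.map Prod.fst).sum = v}.ncard : ℚ))) =
    (PowerSeries.X : PowerSeries ℚ) ^ e *
      (∏ j ∈ Finset.range m, (1 - (PowerSeries.X : PowerSeries ℚ) ^ (2 * j + 1)))⁻¹ :=
  stmt14_general r hr m e he
end

section
/- Fix an integer r ≥ −1. For each positive integer v, let p_r(v) be the number of partitions of v with n copies of n such that, when the parts are listed in ascending lexicographic order, the weighted difference between each pair of consecutive parts is at least r. Then ∑_{v≥0} p_r(v)·q^v = ∑_{m≥0} q^{m² + r·m(m−1)/2} / ((q;q)_m · (q;q²)_m) as formal power series in q, where p_r(0) = 1. -/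
/-!
A partition with parts `(a₀, b₀) < ⋯ < (a_{m-1}, b_{m-1})` is encoded by the pairs `(d_k, c_k)`
with `c_k = b_k - 1`, `d₀ = a₀ - b₀` and `d_k = a_k - a_{k-1} - b_k - b_{k-1} - r`, the slack in
the weighted-difference condition. The conditions on the partition say exactly that all `d_k, c_k`
are natural numbers, so this is a bijection onto arbitrary lists of pairs of naturals, and the size
of the partition is `m² + r·m(m-1)/2 + ∑_k ((m-k) d_k + (2(m-k)-1) c_k)`. Counting the codes of
length `m` by this weight gives `1 / ((q;q)_m (q;q²)_m)`: a pair of geometric series in `q^j` and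
`q^(2j-1)` for each `1 ≤ j ≤ m`.
-/

open Finset

open PowerSeries

section WeightGenFun

variable {α β : Type*}

noncomputable def weightGenFun (wt : α → ℕ) : PowerSeries ℚ :=
  PowerSeries.mk fun n => (Nat.card {a // wt a = n} : ℚ)

def fiberEquivOfEquiv {wa : α → ℕ} {wb : β → ℕ} (e : α ≃ β) (h : ∀ a, wb (e a) = wa a)
    (n : ℕ) : {a // wa a = n} ≃ {b // wb b = n} :=
  e.subtypeEquiv fun a => by rw [h]

lemma weightGenFun_congr {wa : α → ℕ} {wb : β → ℕ} (e : α ≃ β) (h : ∀ a, wb (e a) = wa a) :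
    weightGenFun wb = weightGenFun wa := by
  ext n
  simp only [weightGenFun, coeff_mk, Nat.card_congr (fiberEquivOfEquiv e h n)]

lemma weightGenFun_eq_X_pow [Subsingleton α] (wt : α → ℕ) (a : α) :
    weightGenFun wt = X ^ wt a := by
  ext n
  rw [weightGenFun, coeff_mk, coeff_X_pow]
  split_ifs with h
  · rw [Nat.card_of_subsingleton (⟨a, h.symm⟩ : {a // wt a = n}), Nat.cast_one]
  · have : IsEmpty {a // wt a = n} := ⟨fun b => h (by rw [← b.2, Subsingleton.elim b.1 a])⟩
    rw [Nat.card_of_isEmpty, Nat.cast_zero]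

def addFiberEquiv (wa : α → ℕ) (wb : β → ℕ) (n : ℕ) :
    {p : α × β // wa p.1 + wb p.2 = n} ≃
      Σ x : antidiagonal n, {a // wa a = x.1.1} × {b // wb b = x.1.2} where
  toFun p := ⟨⟨(wa p.1.1, wb p.1.2), mem_antidiagonal.2 p.2⟩, ⟨p.1.1, rfl⟩, ⟨p.1.2, rfl⟩⟩
  invFun x := ⟨(x.2.1.1, x.2.2.1), by rw [x.2.1.2, x.2.2.2]; exact mem_antidiagonal.1 x.1.2⟩
  left_inv _ := rfl
  right_inv := by
    rintro ⟨⟨⟨i, j⟩, hij⟩, ⟨a, ha⟩, ⟨b, hb⟩⟩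
    dsimp only at ha hb
    subst ha hb
    rfl

lemma finite_addFiber {wa : α → ℕ} {wb : β → ℕ} (ha : ∀ n, Finite {a // wa a = n})
    (hb : ∀ n, Finite {b // wb b = n}) (n : ℕ) :
    Finite {p : α × β // wa p.1 + wb p.2 = n} :=
  Finite.of_equiv _ (addFiberEquiv wa wb n).symm

lemma weightGenFun_add {wa : α → ℕ} {wb : β → ℕ} (ha : ∀ n, Finite {a // wa a = n})
    (hb : ∀ n, Finite {b // wb b = n}) :
    weightGenFun (fun p : α × β => wa p.1 + wb p.2) = weightGenFun wa * weightGenFun wb := by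
  ext n
  rw [coeff_mul, weightGenFun, coeff_mk, Nat.card_congr (addFiberEquiv wa wb n), Nat.card_sigma,
    ← sum_coe_sort (antidiagonal n)]
  simp [weightGenFun, Nat.card_prod]

lemma subsingleton_fiber_mul_left {w : ℕ} (hw : 0 < w) (n : ℕ) :
    Subsingleton {k : ℕ // w * k = n} :=
  ⟨fun k l => Subtype.ext (Nat.eq_of_mul_eq_mul_left hw (k.2.trans l.2.symm))⟩

lemma finite_fiber_mul_left {w : ℕ} (hw : 0 < w) (n : ℕ) : Finite {k : ℕ // w * k = n} :=
  have := subsingleton_fiber_mul_left hw n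
  inferInstance

lemma card_fiber_mul_left {w : ℕ} (hw : 0 < w) (n : ℕ) :
    Nat.card {k : ℕ // w * k = n} = if w ∣ n then 1 else 0 := by
  have := subsingleton_fiber_mul_left hw n
  split_ifs with h
  · obtain ⟨k, rfl⟩ := h
    exact Nat.card_of_subsingleton ⟨k, rfl⟩
  · have : IsEmpty {k : ℕ // w * k = n} := ⟨fun k => h ⟨k.1, k.2.symm⟩⟩
    exact Nat.card_of_isEmpty

lemma weightGenFun_mul_left_mul_one_sub {w : ℕ} (hw : 0 < w) :
    weightGenFun (fun k : ℕ => w * k) * (1 - X ^ w) = 1 := by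
  ext n
  rw [mul_sub, mul_one, map_sub, coeff_mul_X_pow', coeff_one]
  simp only [weightGenFun, coeff_mk, card_fiber_mul_left hw]
  rcases Nat.eq_zero_or_pos n with rfl | hn
  · simp [hw.ne']
  · by_cases hwn : w ≤ n
    · have hdvd : w ∣ n - w ↔ w ∣ n := by
        rw [Nat.dvd_sub_self_right]
        exact or_iff_left_of_imp fun h => le_antisymm h hwn ▸ dvd_rfl
      simp [hwn, hn.ne', hdvd]
    · have : ¬ w ∣ n := fun h => hwn (Nat.le_of_dvd hn h)
      simp [hwn, hn.ne', this]

lemma coeff_X_pow_mul_weightGenFun (wt : α → ℕ) (k n : ℕ) :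
    coeff n ((X : PowerSeries ℚ) ^ k * weightGenFun wt) = Nat.card {a // k + wt a = n} := by
  rw [coeff_X_pow_mul']
  split_ifs with h
  · rw [weightGenFun, coeff_mk]
    exact congrArg _ (Nat.card_congr (Equiv.subtypeEquivRight fun a => by omega))
  · have : IsEmpty {a // k + wt a = n} := ⟨fun a => h (by omega)⟩
    rw [Nat.card_of_isEmpty, Nat.cast_zero]

lemma finite_add_left_fiber {wt : α → ℕ} (h : ∀ n, Finite {a // wt a = n}) (k n : ℕ) :
    Finite {a // k + wt a = n} :=
  Finite.of_injective (fun a : {a // k + wt a = n} => (⟨a.1, by omega⟩ : {a // wt a = n - k}))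
    fun _ _ hab => Subtype.ext (Subtype.mk.inj hab)

end WeightGenFun

lemma card_list_eq_sum_card_vector {α : Type*} (P : ℕ → List α → Prop) (N : ℕ)
    (hP : ∀ l, P l.length l → l.length ≤ N)
    (hfin : ∀ m, Finite {c : List.Vector α m // P m c.toList}) :
    Nat.card {l : List α // P l.length l} =
      ∑ m ∈ range (N + 1), Nat.card {c : List.Vector α m // P m c.toList} := by
  let toList : (Σ m : Fin (N + 1), {c : List.Vector α m // P m c.toList}) →
      {l : List α // P l.length l} :=
    fun x => ⟨x.2.1.toList, by rw [x.2.1.toList_length]; exact x.2.2⟩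
  have hbij : Function.Bijective toList := by
    constructor
    · rintro ⟨m, ⟨l, hl⟩, _⟩ ⟨m', ⟨l', hl'⟩, _⟩ h
      obtain rfl : l = l' := congrArg Subtype.val h
      obtain rfl : m = m' := Fin.ext (hl.symm.trans hl')
      rfl
    · rintro ⟨l, hl⟩
      exact ⟨⟨⟨l.length, Nat.lt_succ_of_le (hP l hl)⟩, ⟨l, rfl⟩, hl⟩, rfl⟩
  rw [← Nat.card_congr (Equiv.ofBijective toList hbij), Nat.card_sigma,
    Fin.sum_univ_eq_sum_range (fun m => Nat.card {c : List.Vector α m // P m c.toList})]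

def codeWeight : List (ℕ × ℕ) → ℕ
  | [] => 0
  | (d, c) :: t => (t.length + 1) * d + (2 * t.length + 1) * c + codeWeight t

def vectorConsEquiv (α : Type*) (m : ℕ) : α × List.Vector α m ≃ List.Vector α (m + 1) where
  toFun p := p.1 ::ᵥ p.2
  invFun c := (c.head, c.tail)
  left_inv p := by simp
  right_inv c := by simp

lemma codeWeight_vectorConsEquiv {m : ℕ} (x : (ℕ × ℕ) × List.Vector (ℕ × ℕ) m) :
    codeWeight (vectorConsEquiv _ m x).toList =
      ((m + 1) * x.1.1 + (2 * m + 1) * x.1.2) + codeWeight x.2.toList := by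
  obtain ⟨⟨d, c⟩, t⟩ := x
  simp [vectorConsEquiv, codeWeight]

lemma finite_codeWeight_fiber (m n : ℕ) :
    Finite {c : List.Vector (ℕ × ℕ) m // codeWeight c.toList = n} := by
  induction m generalizing n with
  | zero => infer_instance
  | succ m ih =>
    have hhead : ∀ n, Finite {x : ℕ × ℕ // (m + 1) * x.1 + (2 * m + 1) * x.2 = n} :=
      finite_addFiber (finite_fiber_mul_left m.succ_pos) (finite_fiber_mul_left (2 * m).succ_pos)
    have := finite_addFiber hhead ih n
    exact Finite.of_equiv _
      (fiberEquivOfEquiv (vectorConsEquiv _ m) codeWeight_vectorConsEquiv n)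

lemma weightGenFun_codeWeight_mul (m : ℕ) :
    weightGenFun (fun c : List.Vector (ℕ × ℕ) m => codeWeight c.toList) *
      ((∏ i ∈ range m, (1 - (X : PowerSeries ℚ) ^ (i + 1))) *
        ∏ i ∈ range m, (1 - (X : PowerSeries ℚ) ^ (2 * i + 1))) = 1 := by
  induction m with
  | zero => simp [weightGenFun_eq_X_pow _ List.Vector.nil, codeWeight]
  | succ m ih =>
    have hd₀ : 0 < m + 1 := m.succ_pos
    have hc₀ : 0 < 2 * m + 1 := (2 * m).succ_pos
    rw [weightGenFun_congr (vectorConsEquiv _ m) codeWeight_vectorConsEquiv,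
      weightGenFun_add (finite_addFiber (finite_fiber_mul_left hd₀) (finite_fiber_mul_left hc₀))
        (finite_codeWeight_fiber m),
      weightGenFun_add (finite_fiber_mul_left hd₀) (finite_fiber_mul_left hc₀),
      prod_range_succ, prod_range_succ]
    set g := weightGenFun fun c : List.Vector (ℕ × ℕ) m => codeWeight c.toList
    set A := ∏ i ∈ range m, (1 - (X : PowerSeries ℚ) ^ (i + 1))
    set B := ∏ i ∈ range m, (1 - (X : PowerSeries ℚ) ^ (2 * i + 1))
    calc _ = (weightGenFun (fun k : ℕ => (m + 1) * k) * (1 - X ^ (m + 1))) *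
          (weightGenFun (fun k : ℕ => (2 * m + 1) * k) * (1 - X ^ (2 * m + 1))) *
          (g * (A * B)) := by ring
      _ = 1 := by
        rw [weightGenFun_mul_left_mul_one_sub hd₀, weightGenFun_mul_left_mul_one_sub hc₀, ih,
          one_mul, one_mul]

lemma weightGenFun_codeWeight (m : ℕ) :
    weightGenFun (fun c : List.Vector (ℕ × ℕ) m => codeWeight c.toList) =
      ((∏ i ∈ range m, (1 - (X : PowerSeries ℚ) ^ (i + 1))) *
        ∏ i ∈ range m, (1 - (X : PowerSeries ℚ) ^ (2 * i + 1)))⁻¹ :=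
  (PowerSeries.eq_inv_iff_mul_eq_one (by simp)).2 (weightGenFun_codeWeight_mul m)

def weightedDiff (q p : ℕ × ℕ) : ℤ := (q.1 : ℤ) - p.1 - q.2 - p.2

def partitionsWithGap (r : ℤ) (v : ℕ) : Set (List (ℕ × ℕ)) :=
  {l | l.Pairwise LexLe ∧ (∀ p ∈ l, 1 ≤ p.2 ∧ p.2 ≤ p.1) ∧
    l.IsChain (fun p q => r ≤ weightedDiff q p) ∧ (l.map Prod.fst).sum = v}

section Coding

variable (r : ℤ)

/-- `AdmissibleFrom r s l`: `l` may follow a part `(a, b)` with `a + b + r = s`. A partition has no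
previous part, and its first part only needs `a₀ ≥ b₀`, which is the case `s = 0`. -/
def AdmissibleFrom : ℤ → List (ℕ × ℕ) → Prop
  | _, [] => True
  | s, p :: t => 1 ≤ p.2 ∧ s ≤ (p.1 : ℤ) - p.2 ∧ AdmissibleFrom (p.1 + p.2 + r) t

def partsOfCode : ℤ → List (ℕ × ℕ) → List (ℕ × ℕ)
  | _, [] => []
  | s, (d, c) :: t =>
    let p : ℕ × ℕ := ((s + d + c + 1).toNat, c + 1)
    p :: partsOfCode (p.1 + p.2 + r) t

def codeOfParts : ℤ → List (ℕ × ℕ) → List (ℕ × ℕ)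
  | _, [] => []
  | s, p :: t => (((p.1 : ℤ) - p.2 - s).toNat, p.2 - 1) :: codeOfParts (p.1 + p.2 + r) t

variable {r}

lemma AdmissibleFrom.bounds (hr : -1 ≤ r) {s : ℤ} {l : List (ℕ × ℕ)} (h : AdmissibleFrom r s l) :
    ∀ p ∈ l, 1 ≤ p.2 ∧ s ≤ (p.1 : ℤ) - p.2 := by
  induction l generalizing s with
  | nil => simp
  | cons p t ih =>
    obtain ⟨hp, hs, ht⟩ := h
    refine List.forall_mem_cons.2 ⟨⟨hp, hs⟩, fun q hq => ?_⟩
    obtain ⟨hq, hq'⟩ := ih ht q hq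
    exact ⟨hq, by omega⟩

lemma AdmissibleFrom.pairwise (hr : -1 ≤ r) {s : ℤ} {l : List (ℕ × ℕ)} (h : AdmissibleFrom r s l) :
    l.Pairwise LexLe := by
  induction l generalizing s with
  | nil => exact List.Pairwise.nil
  | cons p t ih =>
    obtain ⟨hp, -, ht⟩ := h
    refine List.pairwise_cons.2 ⟨fun q hq => Or.inl ?_, ih ht⟩
    have := ht.bounds hr q hq
    omega

lemma admissibleFrom_iff_isChain (p : ℕ × ℕ) (t : List (ℕ × ℕ)) :
    AdmissibleFrom r (p.1 + p.2 + r) t ↔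
      (∀ q ∈ t, 1 ≤ q.2) ∧ (p :: t).IsChain (fun p q => r ≤ weightedDiff q p) := by
  induction t generalizing p with
  | nil => simp [AdmissibleFrom]
  | cons q t ih =>
    rw [AdmissibleFrom, ih, List.isChain_cons_cons, List.forall_mem_cons, weightedDiff]
    constructor
    · rintro ⟨hq, hpq, ht, hch⟩
      exact ⟨⟨hq, ht⟩, by omega, hch⟩
    · rintro ⟨⟨hq, ht⟩, hpq, hch⟩
      exact ⟨hq, by omega, ht, hch⟩

lemma admissibleFrom_zero_iff (hr : -1 ≤ r) (l : List (ℕ × ℕ)) :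
    AdmissibleFrom r 0 l ↔ l.Pairwise LexLe ∧ (∀ p ∈ l, 1 ≤ p.2 ∧ p.2 ≤ p.1) ∧
      l.IsChain (fun p q => r ≤ weightedDiff q p) := by
  refine ⟨fun h => ⟨h.pairwise hr, fun p hp => ?_, ?_⟩, fun ⟨_, hb, hch⟩ => ?_⟩
  · have := h.bounds hr p hp
    omega
  · cases l with
    | nil => exact List.isChain_nil
    | cons p t => exact ((admissibleFrom_iff_isChain p t).1 h.2.2).2
  · cases l with
    | nil => trivial
    | cons p t =>
      have hp := hb p List.mem_cons_self
      exact ⟨hp.1, by omega, (admissibleFrom_iff_isChain p t).2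
        ⟨fun q hq => (hb q (List.mem_cons_of_mem p hq)).1, hch⟩⟩

lemma admissibleFrom_partsOfCode (hr : -1 ≤ r) {s : ℤ} (hs : 0 ≤ s) (cs : List (ℕ × ℕ)) :
    AdmissibleFrom r s (partsOfCode r s cs) := by
  induction cs generalizing s with
  | nil => trivial
  | cons x t ih =>
    obtain ⟨d, c⟩ := x
    exact ⟨by simp, by simp; omega, ih (by simp; omega)⟩

lemma codeOfParts_partsOfCode (hr : -1 ≤ r) {s : ℤ} (hs : 0 ≤ s) (cs : List (ℕ × ℕ)) :
    codeOfParts r s (partsOfCode r s cs) = cs := by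
  induction cs generalizing s with
  | nil => rfl
  | cons x t ih =>
    obtain ⟨d, c⟩ := x
    simp only [partsOfCode, codeOfParts, List.cons.injEq]
    refine ⟨by simp; omega, ih (by omega)⟩

lemma partsOfCode_codeOfParts {s : ℤ} {l : List (ℕ × ℕ)} (h : AdmissibleFrom r s l) :
    partsOfCode r s (codeOfParts r s l) = l := by
  induction l generalizing s with
  | nil => rfl
  | cons p t ih =>
    obtain ⟨hp, hs, ht⟩ := h
    have h₁ : (s + ((p.1 : ℤ) - p.2 - s).toNat + (p.2 - 1 : ℕ) + 1).toNat = p.1 := by omega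
    have h₂ : p.2 - 1 + 1 = p.2 := by omega
    simp only [codeOfParts, partsOfCode, h₁, h₂, ih ht]

lemma two_mul_sum_fst_partsOfCode (hr : -1 ≤ r) {s : ℤ} (hs : 0 ≤ s) (cs : List (ℕ × ℕ)) :
    2 * ((((partsOfCode r s cs).map Prod.fst).sum : ℕ) : ℤ) =
      2 * cs.length * s + 2 * codeWeight cs + 2 * (cs.length : ℤ) ^ 2 +
        r * cs.length * (cs.length - 1) := by
  induction cs generalizing s with
  | nil => simp [partsOfCode, codeWeight]
  | cons x t ih =>
    obtain ⟨d, c⟩ := x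
    have hpart : (((s + d + c + 1).toNat : ℕ) : ℤ) = s + d + c + 1 := by omega
    simp only [partsOfCode, List.map_cons, List.sum_cons, Nat.cast_add, codeWeight,
      List.length_cons, Nat.cast_mul]
    rw [mul_add, ih (by omega), hpart]
    push_cast
    ring

lemma sum_fst_partsOfCode_zero (hr : -1 ≤ r) {e : ℕ → ℕ}
    (he : ∀ m : ℕ, 2 * (e m : ℤ) = 2 * (m : ℤ) ^ 2 + r * (m : ℤ) * ((m : ℤ) - 1))
    (cs : List (ℕ × ℕ)) :
    ((partsOfCode r 0 cs).map Prod.fst).sum = e cs.length + codeWeight cs := by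
  have h := two_mul_sum_fst_partsOfCode hr le_rfl cs
  have : ((((partsOfCode r 0 cs).map Prod.fst).sum : ℕ) : ℤ) = e cs.length + codeWeight cs := by
    linarith [he cs.length]
  exact_mod_cast this

lemma admissibleFrom_zero_of_mem {v : ℕ} (hr : -1 ≤ r) {l : List (ℕ × ℕ)}
    (hl : l ∈ partitionsWithGap r v) : AdmissibleFrom r 0 l :=
  (admissibleFrom_zero_iff hr l).2 ⟨hl.1, hl.2.1, hl.2.2.1⟩

def partitionsEquivCode (hr : -1 ≤ r) {e : ℕ → ℕ}
    (he : ∀ m : ℕ, 2 * (e m : ℤ) = 2 * (m : ℤ) ^ 2 + r * (m : ℤ) * ((m : ℤ) - 1)) (v : ℕ) :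
    partitionsWithGap r v ≃ {cs : List (ℕ × ℕ) // e cs.length + codeWeight cs = v} where
  toFun l := ⟨codeOfParts r 0 l, by
    rw [← sum_fst_partsOfCode_zero hr he,
      partsOfCode_codeOfParts (admissibleFrom_zero_of_mem hr l.2)]
    exact l.2.2.2.2⟩
  invFun cs := ⟨partsOfCode r 0 cs, by
    obtain ⟨hpw, hb, hch⟩ :=
      (admissibleFrom_zero_iff hr _).1 (admissibleFrom_partsOfCode hr le_rfl cs.1)
    exact ⟨hpw, hb, hch, by rw [sum_fst_partsOfCode_zero hr he, cs.2]⟩⟩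
  left_inv l := Subtype.ext (partsOfCode_codeOfParts (admissibleFrom_zero_of_mem hr l.2))
  right_inv cs := Subtype.ext (codeOfParts_partsOfCode hr le_rfl cs.1)

end Coding

lemma le_of_two_mul_eq_sq_add {r : ℤ} (hr : -1 ≤ r) {m k : ℕ}
    (h : 2 * (k : ℤ) = 2 * (m : ℤ) ^ 2 + r * m * (m - 1)) : m ≤ k := by
  have hm : (0 : ℤ) ≤ m * (m - 1) := by
    rcases m.eq_zero_or_pos with rfl | hm
    · simp
    · exact mul_nonneg (by omega) (by omega)
  have := mul_nonneg (by omega : (0 : ℤ) ≤ r + 1) hm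
  nlinarith

/-- The `m`-th summand has order `e m ≥ m`, so the sum over `m ≤ v` has the same coefficient of
`q^v` as the full series. -/
theorem stmt15 (r : ℤ) (hr : -1 ≤ r) (e : ℕ → ℕ)
    (he : ∀ m : ℕ, 2 * (e m : ℤ) = 2 * (m : ℤ) ^ 2 + r * (m : ℤ) * ((m : ℤ) - 1))
    (v : ℕ) :
    ({l : List (ℕ × ℕ) | l.Pairwise LexLe ∧ (∀ p ∈ l, 1 ≤ p.2 ∧ p.2 ≤ p.1) ∧
      l.Chain' (fun p q => r ≤ (q.1 : ℤ) - (p.1 : ℤ) - (q.2 : ℤ) - (p.2 : ℤ)) ∧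
      (l.map Prod.fst).sum = v}.ncard : ℚ) =
    PowerSeries.coeff v (∑ m ∈ Finset.range (v + 1),
      (PowerSeries.X : PowerSeries ℚ) ^ (e m) *
        ((∏ i ∈ Finset.range m, (1 - (PowerSeries.X : PowerSeries ℚ) ^ (i + 1))) *
         (∏ i ∈ Finset.range m, (1 - (PowerSeries.X : PowerSeries ℚ) ^ (2 * i + 1))))⁻¹) := by
  have hlen (l : List (ℕ × ℕ)) (hl : e l.length + codeWeight l = v) : l.length ≤ v :=
    (le_of_two_mul_eq_sq_add hr (he l.length)).trans (by omega)
  show ((partitionsWithGap r v).ncard : ℚ) = _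
  rw [← Nat.card_coe_set_eq, Nat.card_congr (partitionsEquivCode hr he v),
    card_list_eq_sum_card_vector (fun m l => e m + codeWeight l = v) v hlen
      (fun m => finite_add_left_fiber (finite_codeWeight_fiber m) _ _), map_sum]
  push_cast
  refine Finset.sum_congr rfl fun m _ => ?_
  rw [← weightGenFun_codeWeight, coeff_X_pow_mul_weightGenFun]
end

section
/- For every positive integer v, the number of partitions of v with n copies of n in which, when the parts are listed in ascending lexicographic order, the weighted difference between each pair of consecutive parts is exactly −1 and the smallest part has its value equal to its subscript (i.e., is of the form j_j), equals the coefficient of q^v in the series ∑_{n≥0} q^{n(n+1)/2} / (q;q²)_n. -/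
/-!
If the smallest part is `j_j`, each condition `((m_i − n_j)) = −1` fixes the next part from the
previous one and the next subscript, so such a partition is the same as a list of positive
subscripts `y₁ + 1, …, y_k + 1` (ascending parts), and every such list occurs. Its size is
`k(k+1)/2 + ∑ (2(k − t) + 1) y_t`, and lists of `k` naturals weighted by `2k − 1, …, 3, 1` are
counted by `1/(q;q²)_k`. Since `k ≤ k(k+1)/2`, only `k ≤ v` contributes to the coefficient of `q^v`.
-/

open Finset

open PowerSeries

theorem coeff_mul_inv_one_sub_X_pow {K : Type*} [Field K] (A : K⟦X⟧) {m : ℕ} (hm : 0 < m)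
    (d : ℕ) : coeff d (A * (1 - X ^ m)⁻¹) = ∑ j ∈ range (d / m + 1), coeff (d - m * j) A := by
  have hB : (mk fun d => ∑ j ∈ range (d / m + 1), coeff (d - m * j) A) * (1 - X ^ m) = A := by
    ext d
    rw [mul_sub, mul_one, map_sub, coeff_mul_X_pow', coeff_mk]
    split_ifs with hmd
    · obtain ⟨e, rfl⟩ := Nat.exists_eq_add_of_le' hmd
      have hshift : ∀ j, e + m - m * (j + 1) = e - m * j := fun j => by
        rw [Nat.mul_succ]; omega
      rw [coeff_mk, Nat.add_div_right _ hm, sum_range_succ' _ (e / m + 1)]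
      simp only [hshift, mul_zero, Nat.sub_zero, Nat.add_sub_cancel, add_sub_cancel_left]
    · rw [Nat.div_eq_of_lt (not_le.mp hmd)]
      simp
  rw [← (eq_mul_inv_iff_mul_eq (by simp [hm.ne'])).mpr hB, coeff_mk]

def oddWeight : List ℕ → ℕ
  | [] => 0
  | y :: t => (2 * t.length + 1) * y + oddWeight t

def oddWeightLists : ℕ → ℕ → Finset (List ℕ)
  | 0, d => if d = 0 then {[]} else ∅
  | k + 1, d => (range (d / (2 * k + 1) + 1)).biUnion fun j =>
      (oddWeightLists k (d - (2 * k + 1) * j)).image (j :: ·)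

theorem mem_oddWeightLists {k d : ℕ} {t : List ℕ} :
    t ∈ oddWeightLists k d ↔ t.length = k ∧ oddWeight t = d := by
  induction k generalizing d t with
  | zero =>
    rw [oddWeightLists]
    rcases t with _ | ⟨y, t⟩ <;> split_ifs with h <;> simp [h, oddWeight, eq_comm]
  | succ k ih =>
    rcases t with _ | ⟨y, t⟩
    · simp [oddWeightLists]
    · simp only [oddWeightLists, mem_biUnion, mem_range, mem_image, List.cons.injEq, ih,
        List.length_cons, Nat.add_right_cancel_iff, oddWeight]
      constructor
      · rintro ⟨j, hj, t, ⟨rfl, hw⟩, rfl, rfl⟩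
        have := (Nat.le_div_iff_mul_le (Nat.succ_pos _)).mp (Nat.lt_succ_iff.mp hj)
        exact ⟨rfl, by rw [hw]; lia⟩
      · rintro ⟨rfl, rfl⟩
        refine ⟨y, ?_, t, ⟨rfl, by lia⟩, rfl, rfl⟩
        exact Nat.lt_succ_of_le ((Nat.le_div_iff_mul_le (Nat.succ_pos _)).mpr (by lia))

theorem card_oddWeightLists_succ (k d : ℕ) :
    #(oddWeightLists (k + 1) d) =
      ∑ j ∈ range (d / (2 * k + 1) + 1), #(oddWeightLists k (d - (2 * k + 1) * j)) := by
  rw [oddWeightLists, card_biUnion]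
  · exact sum_congr rfl fun j _ => card_image_of_injective _ (List.cons_injective)
  · intro i _ j _ hij
    simp only [Function.onFun, disjoint_left, mem_image]
    rintro _ ⟨s, -, rfl⟩ ⟨t, -, h⟩
    exact hij (List.cons.inj h).1.symm

theorem coeff_inv_prod_one_sub_X_pow_odd {K : Type*} [Field K] (k d : ℕ) :
    coeff d (∏ i ∈ range k, (1 - X ^ (2 * i + 1) : K⟦X⟧))⁻¹ = #(oddWeightLists k d) := by
  induction k generalizing d with
  | zero => rw [oddWeightLists, prod_range_zero, inv_one, coeff_one]; split_ifs <;> simp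
  | succ k ih =>
    rw [prod_range_succ, PowerSeries.mul_inv_rev, mul_comm,
      coeff_mul_inv_one_sub_X_pow _ (Nat.succ_pos _), card_oddWeightLists_succ]
    push_cast
    exact sum_congr rfl fun j _ => ih _

def WeightedDiffNegOne (p q : ℕ × ℕ) : Prop := (q.1 : ℤ) - p.1 - q.2 - p.2 = -1

/-- `b` is the excess `m - i` of the first part `m_i`; a weighted difference `−1` forces the excess
of the next part to be `b + 2i − 1`. -/
def diffChain : ℕ → List ℕ → List (ℕ × ℕ)
  | _, [] => []
  | b, y :: t => (b + y + 1, y + 1) :: diffChain (b + 2 * y + 1) t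

theorem map_snd_diffChain (b : ℕ) (y : List ℕ) :
    (diffChain b y).map Prod.snd = y.map (· + 1) := by
  induction y generalizing b with
  | nil => rfl
  | cons y t ih => simp [diffChain, ih]

theorem diffChain_injective (b : ℕ) : Function.Injective (diffChain b) := fun y z h =>
  List.map_injective_iff.mpr (add_left_injective 1) <| by
    rw [← map_snd_diffChain, ← map_snd_diffChain, h]

theorem bounds_of_mem_diffChain {b : ℕ} {y : List ℕ} {p : ℕ × ℕ} (hp : p ∈ diffChain b y) :
    1 ≤ p.2 ∧ b + p.2 ≤ p.1 := by
  induction y generalizing b with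
  | nil => simp [diffChain] at hp
  | cons y t ih =>
    rcases List.mem_cons.mp hp with rfl | hp
    · exact ⟨by simp, by simp; lia⟩
    · have := ih hp; lia

theorem pairwise_lexLe_diffChain (b : ℕ) (y : List ℕ) : (diffChain b y).Pairwise LexLe := by
  induction y generalizing b with
  | nil => exact List.Pairwise.nil
  | cons y t ih =>
    refine List.pairwise_cons.mpr ⟨fun p hp => Or.inl ?_, ih _⟩
    have := bounds_of_mem_diffChain hp
    simp only; lia

theorem chain_diffChain (b : ℕ) (y : List ℕ) : (diffChain b y).IsChain WeightedDiffNegOne := by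
  induction y generalizing b with
  | nil => exact List.isChain_nil
  | cons y t ih =>
    rcases t with _ | ⟨z, t⟩
    · exact List.isChain_singleton _
    · refine List.isChain_cons_cons.mpr ⟨?_, ih _⟩
      simp only [WeightedDiffNegOne]
      push_cast
      ring

theorem head?_diffChain {b : ℕ} {y : List ℕ} {p : ℕ × ℕ} (hp : (diffChain b y).head? = some p) :
    p.1 = b + p.2 := by
  rcases y with _ | ⟨y, t⟩
  · simp [diffChain] at hp
  · simp only [diffChain, List.head?_cons, Option.some.injEq] at hp
    rw [← hp]
    lia

theorem triangle_succ (n : ℕ) : (n + 1) * (n + 1 + 1) / 2 = n * (n + 1) / 2 + (n + 1) := by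
  have : (n + 1) * (n + 1 + 1) = n * (n + 1) + 2 * (n + 1) := by ring
  rw [this, Nat.add_mul_div_left _ _ two_pos]

theorem sum_map_fst_diffChain (b : ℕ) (y : List ℕ) :
    ((diffChain b y).map Prod.fst).sum =
      y.length * b + y.length * (y.length + 1) / 2 + oddWeight y := by
  induction y generalizing b with
  | nil => simp [diffChain, oddWeight]
  | cons y t ih =>
    rw [diffChain, List.map_cons, List.sum_cons, ih, List.length_cons, triangle_succ, oddWeight]
    ring

theorem eq_diffChain {l : List (ℕ × ℕ)} {b : ℕ} (hpos : ∀ p ∈ l, 1 ≤ p.2)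
    (hhead : ∀ p, l.head? = some p → p.1 = b + p.2) (hchain : l.IsChain WeightedDiffNegOne) :
    l = diffChain b (l.map fun p => p.2 - 1) := by
  induction l generalizing b with
  | nil => rfl
  | cons p l ih =>
    have hp2 : 1 ≤ p.2 := hpos p List.mem_cons_self
    have hp1 : p.1 = b + p.2 := hhead p rfl
    rw [List.map_cons, diffChain, ← ih (fun q hq => hpos q (List.mem_cons_of_mem p hq)) ?_
      hchain.tail]
    · congr 1
      ext <;> simp only <;> lia
    · intro q hq
      rcases l with _ | ⟨q', l⟩
      · simp at hq
      · obtain rfl : q' = q := Option.some.inj hq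
        have : WeightedDiffNegOne p q' := (List.isChain_cons_cons.mp hchain).1
        simp only [WeightedDiffNegOne] at this
        lia

def chainPartitions (v : ℕ) : Set (List (ℕ × ℕ)) :=
  {l | l.Pairwise LexLe ∧ (∀ p ∈ l, 1 ≤ p.2 ∧ p.2 ≤ p.1) ∧ (∀ p, l.head? = some p → p.1 = p.2) ∧
    l.IsChain WeightedDiffNegOne ∧ (l.map Prod.fst).sum = v}

theorem chainPartitions_eq_image (v : ℕ) :
    chainPartitions v = diffChain 0 '' {y | y.length * (y.length + 1) / 2 + oddWeight y = v} := by
  ext l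
  constructor
  · rintro ⟨-, hbounds, hhead, hchain, rfl⟩
    have hl := eq_diffChain (b := 0) (fun p hp => (hbounds p hp).1) (by simpa using hhead) hchain
    refine ⟨_, ?_, hl.symm⟩
    rw [Set.mem_ofPred_eq]
    conv_rhs => rw [hl, sum_map_fst_diffChain, mul_zero, zero_add]
  · rintro ⟨y, rfl, rfl⟩
    refine ⟨pairwise_lexLe_diffChain 0 y, fun p hp => ?_, fun p hp => ?_, chain_diffChain 0 y, ?_⟩
    · have := bounds_of_mem_diffChain hp; lia
    · simpa using head?_diffChain hp
    · rw [sum_map_fst_diffChain, mul_zero, zero_add]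

theorem le_triangle (n : ℕ) : n ≤ n * (n + 1) / 2 :=
  (Nat.le_div_iff_mul_le two_pos).mpr (by rcases n with _ | n <;> nlinarith)

theorem ncard_chainPartitions (v : ℕ) :
    (chainPartitions v).ncard = ∑ k ∈ range (v + 1),
      if k * (k + 1) / 2 ≤ v then #(oddWeightLists k (v - k * (k + 1) / 2)) else 0 := by
  set Y : ℕ → Finset (List ℕ) := fun k =>
    if k * (k + 1) / 2 ≤ v then oddWeightLists k (v - k * (k + 1) / 2) else ∅
  have mem_Y : ∀ k y, y ∈ Y k ↔ y.length = k ∧ y.length * (y.length + 1) / 2 + oddWeight y = v := by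
    intro k y
    simp only [Y]
    split_ifs with hk
    · rw [mem_oddWeightLists]; constructor <;> rintro ⟨rfl, h⟩ <;> exact ⟨rfl, by lia⟩
    · simp only [notMem_empty, false_iff, not_and]; rintro rfl; lia
  have hY : {y | y.length * (y.length + 1) / 2 + oddWeight y = v} = ↑((range (v + 1)).biUnion Y) := by
    ext y
    simp only [Set.mem_ofPred_eq, coe_biUnion, coe_range, Set.mem_Iio, mem_coe, Set.mem_iUnion, mem_Y,
      exists_prop]
    constructor
    · intro h; exact ⟨_, by have := le_triangle y.length; lia, rfl, h⟩
    · rintro ⟨-, -, -, h⟩; exact h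
  rw [chainPartitions_eq_image, Set.ncard_image_of_injective _ (diffChain_injective 0), hY,
    Set.ncard_coe_finset, card_biUnion]
  · exact sum_congr rfl fun k _ => by simp only [Y]; split_ifs <;> rfl
  · intro i _ j _ hij
    simp only [Function.onFun, disjoint_left, mem_Y]
    rintro y ⟨rfl, -⟩ ⟨rfl, -⟩
    exact hij rfl

theorem stmt16_general (v : ℕ) :
    ({l : List (ℕ × ℕ) | l.Pairwise LexLe ∧ (∀ p ∈ l, 1 ≤ p.2 ∧ p.2 ≤ p.1) ∧
      (∀ p : ℕ × ℕ, l.head? = some p → p.1 = p.2) ∧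
      l.Chain' (fun p q => (q.1 : ℤ) - (p.1 : ℤ) - (q.2 : ℤ) - (p.2 : ℤ) = -1) ∧
      (l.map Prod.fst).sum = v}.ncard : ℚ) =
    PowerSeries.coeff v (∑ n ∈ Finset.range (v + 1),
      (PowerSeries.X : PowerSeries ℚ) ^ (n * (n + 1) / 2) *
        (∏ i ∈ Finset.range n, (1 - (PowerSeries.X : PowerSeries ℚ) ^ (2 * i + 1)))⁻¹) := by
  change ((chainPartitions v).ncard : ℚ) = _
  rw [ncard_chainPartitions, Nat.cast_sum, map_sum]
  refine sum_congr rfl fun k _ => ?_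
  rw [coeff_X_pow_mul', coeff_inv_prod_one_sub_X_pow_odd]
  split_ifs <;> simp

/-- the tenth order mock theta function
`ψ₁₀(q) = ∑_n q^{n(n+1)/2}/(q;q²)_n` generates partitions with n copies of n
with all consecutive weighted differences −1 and smallest part of the form
`j_j`.  Since the `n`-th term has order at least `n`, the sum may be truncated
at `n = v` when extracting the coefficient of `q^v`. -/
theorem stmt16 (v : ℕ) (hv : 0 < v) :
    ({l : List (ℕ × ℕ) | l.Pairwise LexLe ∧ (∀ p ∈ l, 1 ≤ p.2 ∧ p.2 ≤ p.1) ∧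
      (∀ p : ℕ × ℕ, l.head? = some p → p.1 = p.2) ∧
      l.Chain' (fun p q => (q.1 : ℤ) - (p.1 : ℤ) - (q.2 : ℤ) - (p.2 : ℤ) = -1) ∧
      (l.map Prod.fst).sum = v}.ncard : ℚ) =
    PowerSeries.coeff v (∑ n ∈ Finset.range (v + 1),
      (PowerSeries.X : PowerSeries ℚ) ^ (n * (n + 1) / 2) *
        (∏ i ∈ Finset.range n, (1 - (PowerSeries.X : PowerSeries ℚ) ^ (2 * i + 1)))⁻¹) :=
  stmt16_general v
end

section
/- For every positive integer m, the number of ordinary partitions of m in which the largest part occurs exactly once and every other part value occurs exactly twice equals the number of partitions of m with n copies of n in which, when the parts are listed in ascending lexicographic order, the weighted difference between each pair of consecutive parts is exactly 0 and the smallest part has its value equal to its subscript (i.e., is of the form j_j). -/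
/-!
Both sides are in bijection with the strictly increasing sequences `0 < a₁ < ⋯ < a_k` satisfying
`2 (a₁ + ⋯ + a_k) - a_k = m`. The ordinary partition is `a₁, a₁, …, a_{k-1}, a_{k-1}, a_k`. The
partition with n copies of n is `(a₁)_{a₁}, (a₁ + a₂)_{a₂ - a₁}, …, (a_{k-1} + a_k)_{a_k - a_{k-1}}`:
a part `n_i` determines `a = (n + i) / 2` and the previous term `(n - i) / 2`, and weighted difference
`0` between consecutive parts says exactly that these two readings of the shared term agree.
-/

namespace NCopies

section DoubleButLast

variable {α : Type*}

def doubleButLast : List α → List α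
  | [] => []
  | [a] => [a]
  | a :: b :: v => a :: a :: doubleButLast (b :: v)

@[simp]
theorem mem_doubleButLast {v : List α} {x : α} : x ∈ doubleButLast v ↔ x ∈ v := by
  fun_induction doubleButLast v <;> simp_all

theorem getLast?_doubleButLast (v : List α) : (doubleButLast v).getLast? = v.getLast? := by
  fun_induction doubleButLast v <;> simp_all [List.getLast?_cons]

theorem doubleButLast_append_perm {v : List α} {L : α} (h : v.getLast? = some L) :
    (doubleButLast v ++ [L]).Perm (v ++ v) := by
  fun_induction doubleButLast v with
  | case1 => simp at h
  | case2 a => simp_all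
  | case3 a b v ih =>
    rw [List.getLast?_cons_cons] at h
    exact ((ih h).cons a).cons a |>.trans (List.perm_middle.symm.cons a)

theorem doubleButLast_injective : Function.Injective (doubleButLast (α := α)) := by
  intro v w h
  fun_induction doubleButLast v generalizing w with
  | case3 a b v ih =>
    match w with
    | [] | [_] => simp [doubleButLast] at h
    | a' :: b' :: w =>
      simp only [doubleButLast, List.cons.injEq] at h
      rw [h.1, ih h.2.2]
  | _ => match w with
    | [] | [_] | _ :: _ :: _ => simp_all [doubleButLast]

theorem pairwise_doubleButLast {R : α → α → Prop} [Std.Refl R] {v : List α}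
    (h : v.Pairwise R) : (doubleButLast v).Pairwise R := by
  fun_induction doubleButLast v with
  | case3 a b v ih =>
    obtain ⟨hab, hbv⟩ := List.pairwise_cons.1 h
    have ha : ∀ x ∈ doubleButLast (b :: v), R a x := fun x hx => hab x (mem_doubleButLast.1 hx)
    refine List.pairwise_cons.2 ⟨?_, List.pairwise_cons.2 ⟨ha, ih hbv⟩⟩
    rintro x (_ | ⟨_, hx⟩)
    exacts [refl a, ha x hx]
  | _ => simp

theorem count_doubleButLast [DecidableEq α] {v : List α} (hv : v.Nodup) {L : α}
    (hL : v.getLast? = some L) (x : α) : (doubleButLast v).count x + (if x = L then 1 else 0) =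
      if x ∈ v then 2 else 0 := by
  have := (List.perm_iff_count.1 (doubleButLast_append_perm hL)) x
  rw [List.count_append, List.count_append, hv.count, List.count_singleton] at this
  split_ifs at this ⊢ <;> simp_all

end DoubleButLast

theorem sum_doubleButLast_add {v : List ℕ} {L : ℕ} (hL : v.getLast? = some L) :
    (doubleButLast v).sum + L = 2 * v.sum := by
  simpa [two_mul] using (doubleButLast_append_perm hL).sum_eq

theorem max?_eq_getLast?_of_pairwise {α : Type*} [LinearOrder α] {l : List α}
    (h : l.Pairwise (· ≤ ·)) : l.max? = l.getLast? := by
  cases l using List.reverseRecOn with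
  | nil => rfl
  | append_singleton l a =>
    rw [List.getLast?_concat, List.max?_eq_some_iff]
    exact ⟨by simp, fun b hb => by simpa using h.rel_getLast hb⟩

def MaxOnceOthersTwice (l : List ℕ) : Prop :=
  ∃ M, l.max? = some M ∧ l.count M = 1 ∧ ∀ x ∈ l, x ≠ M → l.count x = 2

theorem maxOnceOthersTwice_doubleButLast {v : List ℕ} (hv : v.Pairwise (· < ·)) (hne : v ≠ []) :
    MaxOnceOthersTwice (doubleButLast v) := by
  obtain ⟨L, hL⟩ : ∃ L, v.getLast? = some L := ⟨_, List.getLast?_eq_some_getLast hne⟩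
  have hcount := count_doubleButLast (hv.imp ne_of_lt) hL
  refine ⟨L, ?_, ?_, fun x hx hxL => ?_⟩
  · rw [max?_eq_getLast?_of_pairwise (pairwise_doubleButLast (hv.imp le_of_lt)),
      getLast?_doubleButLast, hL]
  · simpa [List.mem_of_getLast? hL] using hcount L
  · simpa [hxL, mem_doubleButLast.1 hx] using hcount x

/-- A sorted list is determined by its multiset, which here is that of `doubleButLast l.dedup`. -/
theorem exists_doubleButLast_eq {l : List ℕ} (hl : l.Pairwise (· ≤ ·))
    (h : MaxOnceOthersTwice l) : ∃ v, v.Pairwise (· < ·) ∧ doubleButLast v = l := by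
  obtain ⟨M, hM, hcountM, hcount⟩ := h
  have hMl : M ∈ l := (List.max?_eq_some_iff.1 hM).1
  set v := l.dedup
  have hv : v.Pairwise (· < ·) :=
    ((hl.sublist l.dedup_sublist).and (List.nodup_dedup l)).imp fun h => lt_of_le_of_ne h.1 h.2
  have hvM : v.getLast? = some M := by
    rw [← max?_eq_getLast?_of_pairwise (hv.imp le_of_lt), List.max?_eq_some_iff]
    simpa [v] using (List.max?_eq_some_iff.1 hM)
  have hperm : (l ++ [M]).Perm (v ++ v) := by
    refine List.perm_iff_count.2 fun x => ?_
    rw [List.count_append, List.count_append, (List.nodup_dedup l).count, List.count_singleton]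
    by_cases hxM : x = M
    · simp [hxM, hcountM, hMl]
    · by_cases hx : x ∈ l
      · simp [Ne.symm hxM, hcount x hx hxM, hx]
      · simp [Ne.symm hxM, List.count_eq_zero_of_not_mem hx, hx]
  refine ⟨v, hv, List.Perm.eq_of_pairwise' (pairwise_doubleButLast (hv.imp le_of_lt)) hl ?_⟩
  exact (List.perm_append_right_iff [M]).1 ((doubleButLast_append_perm hvM).trans hperm.symm)

def weightedDiff (p q : ℕ × ℕ) : ℤ := q.1 - p.1 - q.2 - p.2

def sumDiffPairs : ℕ → List ℕ → List (ℕ × ℕ)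
  | _, [] => []
  | a, b :: v => (b + a, b - a) :: sumDiffPairs b v

theorem sumDiffPairs_injective (a : ℕ) : Function.Injective (sumDiffPairs a) := by
  intro v w h
  induction v generalizing a w with
  | nil => cases w <;> simp_all [sumDiffPairs]
  | cons b v ih =>
    cases w with
    | nil => simp [sumDiffPairs] at h
    | cons c w =>
      simp only [sumDiffPairs, List.cons.injEq, Prod.mk.injEq] at h
      obtain rfl : b = c := by omega
      rw [ih b h.2]

theorem lt_fst_of_mem_sumDiffPairs {a : ℕ} {v : List ℕ} (hv : (a :: v).IsChain (· < ·))
    {p : ℕ × ℕ} (hp : p ∈ sumDiffPairs a v) : 2 * a < p.1 := by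
  induction v generalizing a with
  | nil => simp [sumDiffPairs] at hp
  | cons b v ih =>
    rw [List.isChain_cons_cons] at hv
    rcases List.mem_cons.1 hp with rfl | hp
    · simp only; omega
    · have := ih hv.2 hp; omega

theorem pairwise_lexLe_sumDiffPairs {a : ℕ} {v : List ℕ} (hv : (a :: v).IsChain (· < ·)) :
    (sumDiffPairs a v).Pairwise LexLe := by
  induction v generalizing a with
  | nil => exact .nil
  | cons b v ih =>
    rw [List.isChain_cons_cons] at hv
    refine List.pairwise_cons.2 ⟨fun q hq => Or.inl ?_, ih hv.2⟩
    have := lt_fst_of_mem_sumDiffPairs hv.2 hq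
    simp only; omega

theorem sum_map_fst_sumDiffPairs_add {a L : ℕ} {v : List ℕ} (hL : v.getLast? = some L) :
    ((sumDiffPairs a v).map Prod.fst).sum + L = 2 * v.sum + a := by
  induction v generalizing a with
  | nil => simp at hL
  | cons b v ih =>
    cases v with
    | nil =>
      obtain rfl : b = L := by simpa using hL
      show b + a + 0 + b = 2 * (b + 0) + a
      omega
    | cons c v =>
      have := ih (a := b) (by simpa using hL)
      simp only [sumDiffPairs, List.map_cons, List.sum_cons] at this ⊢
      omega

theorem exists_sumDiffPairs_eq_iff (a : ℕ) (l : List (ℕ × ℕ)) :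
    (∃ v, (a :: v).IsChain (· < ·) ∧ sumDiffPairs a v = l) ↔
      (∀ p ∈ l, 1 ≤ p.2 ∧ p.2 ≤ p.1) ∧ (∀ p, l.head? = some p → p.1 = p.2 + 2 * a) ∧
        l.IsChain (fun p q => weightedDiff p q = 0) := by
  induction l generalizing a with
  | nil => exact ⟨fun _ => by simp, fun _ => ⟨[], by simp, rfl⟩⟩
  | cons p l ih =>
    constructor
    · rintro ⟨_ | ⟨b, v⟩, hv, h⟩
      · simp [sumDiffPairs] at h
      simp only [sumDiffPairs, List.cons.injEq] at h
      obtain ⟨rfl, rfl⟩ := h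
      rw [List.isChain_cons_cons] at hv
      obtain ⟨hbounds, hhead, hchain⟩ := (ih b).1 ⟨v, hv.2, rfl⟩
      refine ⟨?_, ?_, List.isChain_cons.2 ⟨fun q hq => ?_, hchain⟩⟩
      · rintro q (_ | ⟨_, hq⟩)
        · simp only; omega
        · exact hbounds q hq
      · simp only [List.head?_cons, Option.some.injEq, forall_eq']; omega
      · have := hhead q hq
        simp only [weightedDiff]; omega
    · rintro ⟨hbounds, hhead, hchain⟩
      rw [List.isChain_cons] at hchain
      have hp := hbounds p (List.mem_cons_self ..)
      have hp' := hhead p rfl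
      obtain ⟨v, hv, rfl⟩ := (ih (p.2 + a)).2 ⟨fun q hq => hbounds q (List.mem_cons_of_mem _ hq),
        fun q hq => by have := hchain.1 q hq; simp only [weightedDiff] at this; omega, hchain.2⟩
      refine ⟨(p.2 + a) :: v, List.isChain_cons_cons.2 ⟨by omega, hv⟩, ?_⟩
      simp only [sumDiffPairs]
      congr 1
      ext <;> simp only <;> omega

def strictChainsOfWeight (m : ℕ) : Set (List ℕ) :=
  {v | (0 :: v).IsChain (· < ·) ∧ ∃ L, v.getLast? = some L ∧ 2 * v.sum = m + L}

theorem image_doubleButLast_strictChainsOfWeight (m : ℕ) :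
    doubleButLast '' strictChainsOfWeight m =
      {l | l.Pairwise (· ≤ ·) ∧ (∀ x ∈ l, 0 < x) ∧ l.sum = m ∧ MaxOnceOthersTwice l} := by
  ext l
  constructor
  · rintro ⟨v, ⟨hv, L, hL, hsum⟩, rfl⟩
    rw [List.isChain_iff_pairwise, List.pairwise_cons] at hv
    have hne : v ≠ [] := by rintro rfl; simp at hL
    have := sum_doubleButLast_add hL
    exact ⟨pairwise_doubleButLast (hv.2.imp le_of_lt), fun x hx => hv.1 x (mem_doubleButLast.1 hx),
      by omega, maxOnceOthersTwice_doubleButLast hv.2 hne⟩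
  · rintro ⟨hl, hpos, hsum, h⟩
    obtain ⟨v, hv, rfl⟩ := exists_doubleButLast_eq hl h
    have hne : v ≠ [] := by rintro rfl; obtain ⟨M, hM, -⟩ := h; simp [doubleButLast] at hM
    have := sum_doubleButLast_add (List.getLast?_eq_some_getLast hne)
    refine ⟨v, ⟨?_, _, List.getLast?_eq_some_getLast hne, by omega⟩, rfl⟩
    rw [List.isChain_iff_pairwise, List.pairwise_cons]
    exact ⟨fun x hx => hpos x (mem_doubleButLast.2 hx), hv⟩

theorem image_sumDiffPairs_strictChainsOfWeight {m : ℕ} (hm : 0 < m) :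
    sumDiffPairs 0 '' strictChainsOfWeight m =
      {l | l.Pairwise LexLe ∧ (∀ p ∈ l, 1 ≤ p.2 ∧ p.2 ≤ p.1) ∧
        (∀ p : ℕ × ℕ, l.head? = some p → p.1 = p.2) ∧
        l.IsChain (fun p q => weightedDiff p q = 0) ∧ (l.map Prod.fst).sum = m} := by
  ext l
  constructor
  · rintro ⟨v, ⟨hv, L, hL, hsum⟩, rfl⟩
    obtain ⟨hbounds, hhead, hchain⟩ := (exists_sumDiffPairs_eq_iff 0 _).1 ⟨v, hv, rfl⟩
    have := sum_map_fst_sumDiffPairs_add (a := 0) hL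
    exact ⟨pairwise_lexLe_sumDiffPairs hv, hbounds, by simpa using hhead, hchain, by omega⟩
  · rintro ⟨-, hbounds, hhead, hchain, hsum⟩
    obtain ⟨v, hv, rfl⟩ := (exists_sumDiffPairs_eq_iff 0 l).2 ⟨hbounds, by simpa using hhead, hchain⟩
    have hne : v ≠ [] := by rintro rfl; exact hm.ne hsum
    have := sum_map_fst_sumDiffPairs_add (a := 0) (List.getLast?_eq_some_getLast hne)
    exact ⟨v, ⟨hv, _, List.getLast?_eq_some_getLast hne, by omega⟩, rfl⟩

end NCopies

open NCopies in
/-- Corollary 28 of the paper: ordinary partitions of `m` whose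
largest part occurs exactly once and all other part values occur exactly twice
are equinumerous with partitions of `m` with n copies of n whose consecutive
weighted differences are all 0 and whose smallest part is of the form `j_j`. -/
theorem stmt18 (m : ℕ) (hm : 0 < m) :
    {l : List ℕ | l.Pairwise (· ≤ ·) ∧ (∀ x ∈ l, 0 < x) ∧ l.sum = m ∧
      ∃ M, l.max? = some M ∧ l.count M = 1 ∧
        ∀ x ∈ l, x ≠ M → l.count x = 2}.ncard =
    {l : List (ℕ × ℕ) | l.Pairwise LexLe ∧ (∀ p ∈ l, 1 ≤ p.2 ∧ p.2 ≤ p.1) ∧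
      (∀ p : ℕ × ℕ, l.head? = some p → p.1 = p.2) ∧
      l.Chain' (fun p q => (q.1 : ℤ) - (p.1 : ℤ) - (q.2 : ℤ) - (p.2 : ℤ) = 0) ∧
      (l.map Prod.fst).sum = m}.ncard := by
  calc _ = (doubleButLast '' strictChainsOfWeight m).ncard := by
        rw [image_doubleButLast_strictChainsOfWeight]; rfl
    _ = (strictChainsOfWeight m).ncard := Set.ncard_image_of_injective _ doubleButLast_injective
    _ = (sumDiffPairs 0 '' strictChainsOfWeight m).ncard :=
        (Set.ncard_image_of_injective _ (sumDiffPairs_injective 0)).symm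
    _ = _ := by rw [image_sumDiffPairs_strictChainsOfWeight hm]; rfl
end
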